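/- arXiv:0802.4412 — 6 statements merged into one kernel-verified Lean document; each statement's English description precedes it below -/
import Mathlib

section
/- Let φ : K^n → K^n be a composition φ = F_m ∘ ⋯ ∘ F_1 of maps F_i : K^n → K^n on a finite set, and let ψ = F_s ∘ ⋯ ∘ F_1 ∘ F_m ∘ ⋯ ∘ F_{s+1} be the composition obtained by cyclically shifting the order by s. Then φ and ψ are cycle equivalent: there is a bijection h from Per(φ) to Per(ψ) with ψ ∘ h = h ∘ φ on Per(φ). -/
/-- `seqComp [F₁, …, Fₘ] = Fₘ ∘ ⋯ ∘ F₁` (apply `F₁` first). -/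
def seqComp {X : Type*} (l : List (X → X)) : X → X :=
  l.foldl (fun g f => f ∘ g) id

lemma seqComp_foldl {X : Type*} (l : List (X → X)) (g : X → X) :
    l.foldl (fun g f => f ∘ g) g = seqComp l ∘ g := by
  induction l generalizing g with
  | nil => rfl
  | cons a l ih =>
    show l.foldl _ (a ∘ g) = _
    rw [ih]
    have h2 : seqComp (a :: l) = seqComp l ∘ (a ∘ id) := by
      rw [seqComp, List.foldl_cons, ih]
    rw [h2]
    rfl

lemma seqComp_append {X : Type*} (l₁ l₂ : List (X → X)) :
    seqComp (l₁ ++ l₂) = seqComp l₂ ∘ seqComp l₁ := by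
  simp [seqComp, List.foldl_append, ← seqComp_foldl]
  rw [seqComp_foldl]
  rfl

open Function in
lemma semiconj_AB {X : Type*} (A B : X → X) :
    Function.Semiconj A (B ∘ A) (A ∘ B) := fun x => rfl

open Function in
lemma mapsTo_per {X : Type*} (A B : X → X) :
    Set.MapsTo A (periodicPts (B ∘ A)) (periodicPts (A ∘ B)) := by
  intro x hx
  obtain ⟨k, hk, hx⟩ := hx
  exact ⟨k, hk, by
    have := (semiconj_AB A B).iterate_right k
    have h2 := this x
    simp only [IsPeriodicPt, IsFixedPt] at hx ⊢
    rw [← h2, hx]⟩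

open Function in
lemma key {X : Type*} (A B : X → X) :
    Set.BijOn A (periodicPts (B ∘ A)) (periodicPts (A ∘ B)) := by
  refine ⟨mapsTo_per A B, ?_, ?_⟩
  · intro x hx y hy hxy
    obtain ⟨k, hk, hxk⟩ := hx
    obtain ⟨l, hl, hyl⟩ := hy
    have hxkl : IsPeriodicPt (B ∘ A) (k * l) x := hxk.mul_const l
    have hykl : IsPeriodicPt (B ∘ A) (k * l) y := hyl.const_mul k
    have hpos : 0 < k * l := Nat.mul_pos hk hl
    obtain ⟨p, hp⟩ := Nat.exists_eq_succ_of_ne_zero hpos.ne'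
    rw [hp] at hxkl hykl
    calc x = (B ∘ A)^[p + 1] x := hxkl.symm
      _ = (B ∘ A)^[p] ((B ∘ A) x) := Function.iterate_succ_apply _ _ _
      _ = (B ∘ A)^[p] ((B ∘ A) y) := by
          simp only [Function.comp_apply, hxy]
      _ = (B ∘ A)^[p + 1] y := (Function.iterate_succ_apply _ _ _).symm
      _ = y := hykl
  · intro z hz
    obtain ⟨k, hk, hzk⟩ := hz
    obtain ⟨p, rfl⟩ := Nat.exists_eq_succ_of_ne_zero hk.ne'
    have hz' : (A ∘ B)^[p] z ∈ periodicPts (A ∘ B) := by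
      obtain ⟨q, hq, hq2⟩ : z ∈ periodicPts (A ∘ B) := ⟨p + 1, hk, hzk⟩
      exact ⟨q, hq, hq2.apply_iterate p⟩
    refine ⟨B ((A ∘ B)^[p] z), mapsTo_per B A hz', ?_⟩
    have : A (B ((A ∘ B)^[p] z)) = (A ∘ B)^[p + 1] z := by
      rw [Function.iterate_succ_apply']; rfl
    rw [this, hzk]

theorem cyclic_shift_cycle_equivalent {K : Type*} [Fintype K] {n m : ℕ}
    (F : Fin m → ((Fin n → K) → (Fin n → K))) (s : ℕ) (hs : s ≤ m) :
    ∃ h : (Fin n → K) → (Fin n → K),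
      Set.BijOn h (Function.periodicPts (seqComp (List.ofFn F)))
        (Function.periodicPts (seqComp ((List.ofFn F).rotate s))) ∧
      ∀ y ∈ Function.periodicPts (seqComp (List.ofFn F)),
        seqComp ((List.ofFn F).rotate s) (h y) = h (seqComp (List.ofFn F) y) := by
  set l := List.ofFn F
  have hlen : s ≤ l.length := by simpa [l] using hs
  have hrot : l.rotate s = l.drop s ++ l.take s := List.rotate_eq_drop_append_take hlen
  set A := seqComp (l.take s)
  set B := seqComp (l.drop s)
  have h1 : seqComp l = B ∘ A := by
    conv_lhs => rw [← List.take_append_drop s l]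
    exact seqComp_append _ _
  have h2 : seqComp (l.rotate s) = A ∘ B := by
    rw [hrot]; exact seqComp_append _ _
  refine ⟨A, ?_, ?_⟩
  · rw [h1, h2]; exact key A B
  · intro y _; rw [h1, h2]; rfl
end

section
/- Let Y be a finite simple graph with vertex set {1,…,n}. The map sending a linear order π on the vertices to the acyclic orientation O_Y^π (orienting each edge {u,v} from the π-smaller to the π-larger endpoint) induces a bijection between the set of equivalence classes of permutations of the vertices under the relation generated by swapping adjacent entries that are non-adjacent in Y, and the set of acyclic orientations of Y. -/
/-- An orientation of a simple graph: a choice of direction for each edge. -/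
structure GraphOrientation {V : Type*} (G : SimpleGraph V) where
  dir : V → V → Prop
  consistent : ∀ u v, G.Adj u v ↔ (dir u v ∨ dir v u)
  asymm : ∀ u v, dir u v → ¬ dir v u

/-- An orientation is acyclic if its directed graph has no directed cycle. -/
def GraphOrientation.IsAcyclic {V : Type*} {G : SimpleGraph V} (O : GraphOrientation G) : Prop :=
  ∀ v, ¬ Relation.TransGen O.dir v v

/-- The type of acyclic orientations of `G`. -/
def AcycGraphOrientation {V : Type*} (G : SimpleGraph V) := {O : GraphOrientation G // O.IsAcyclic}

/-- `Click O O'` holds when `O'` is obtained from `O` by a source-to-sink operation: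
reversing all edges incident to some source vertex `v`. -/
def Click {V : Type*} {G : SimpleGraph V} (O O' : GraphOrientation G) : Prop :=
  ∃ v, (∀ u, ¬ O.dir u v) ∧
    ∀ u w, O'.dir u w ↔ (((u = v ∨ w = v) ∧ O.dir w u) ∨ (u ≠ v ∧ w ≠ v ∧ O.dir u w))

/-- κ(G): the number of equivalence classes of acyclic orientations of `G` under the
equivalence generated by source-to-sink operations. -/
noncomputable def kappa {V : Type*} (G : SimpleGraph V) : ℕ :=
  Nat.card (Quot (fun A B : AcycGraphOrientation G => Click A.1 B.1))

/-- Two permutations are related if they differ by a transposition of two consecutive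
entries that are non-adjacent in `G`. -/
def SwapRel {n : ℕ} (G : SimpleGraph (Fin n)) (π π' : Equiv.Perm (Fin n)) : Prop :=
  ∃ (k : Fin n) (h : (k : ℕ) + 1 < n),
    ¬ G.Adj (π k) (π ⟨(k : ℕ) + 1, h⟩) ∧ π' = π * Equiv.swap k ⟨(k : ℕ) + 1, h⟩

/-! A permutation `π` orients each edge of `G` towards the vertex occurring later in `π`: this is
the orientation induced by the proper colouring `π⁻¹` with ordered colours. Exchanging two
consecutive entries that are not adjacent in `G` turns no edge around, so the map descends to the
quotient.

It is onto because an acyclic orientation of a finite graph is well-founded, hence induced by its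
rank function, and sorting the vertices by rank gives a permutation inducing it.

It is injective by bubble sort. If `σ ≠ τ` induce the same orientation, then `τ⁻¹σ` has a descent
at some consecutive positions `k, k + 1`; the vertices `σ k, σ (k + 1)` are then not adjacent, since
`σ` and `τ` order them differently, and exchanging them strictly shrinks the set of pairs of
vertices that `σ` and `τ` order differently. -/

universe u

namespace GraphOrientation

variable {V : Type*} {G : SimpleGraph V}

theorem ext_dir {O O' : GraphOrientation G} (h : O.dir = O'.dir) : O = O' := by
  cases O; cases O'; subst h; rfl

theorem eq_of_dir_imp {O O' : GraphOrientation G} (h : ∀ u v, O.dir u v → O'.dir u v) :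
    O = O' := by
  refine ext_dir <| funext₂ fun u v => propext ⟨h u v, fun h' => ?_⟩
  rcases (O.consistent u v).1 ((O'.consistent u v).2 (Or.inl h')) with huv | hvu
  · exact huv
  · exact absurd (h v u hvu) (O'.asymm u v h')

theorem IsAcyclic.wellFounded [Finite V] {O : GraphOrientation G} (hO : O.IsAcyclic) :
    WellFounded O.dir :=
  have : IsTrans V (Relation.TransGen O.dir) := ⟨fun _ _ _ => Relation.TransGen.trans⟩
  have : Std.Irrefl (Relation.TransGen O.dir) := ⟨hO⟩
  (Finite.wellFounded_of_trans_of_irrefl _).mono fun _ _ => Relation.TransGen.single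

end GraphOrientation

namespace SimpleGraph.Coloring

variable {V α : Type*} [LinearOrder α] {G : SimpleGraph V}

def orientation (C : G.Coloring α) : GraphOrientation G where
  dir u v := G.Adj u v ∧ C u < C v
  consistent u v :=
    ⟨fun h => (C.valid h).lt_or_gt.imp (⟨h, ·⟩) (⟨h.symm, ·⟩),
      by rintro (⟨h, -⟩ | ⟨h, -⟩); exacts [h, h.symm]⟩
  asymm _ _ h h' := h.2.asymm h'.2

theorem orientation_isAcyclic (C : G.Coloring α) : C.orientation.IsAcyclic := by
  have hlt : ∀ u v, Relation.TransGen C.orientation.dir u v → C u < C v := fun u v h =>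
    h.trans_induction_on (fun h => h.2) fun _ _ => lt_trans
  exact fun v hv => lt_irrefl _ (hlt v v hv)

end SimpleGraph.Coloring

theorem GraphOrientation.IsAcyclic.exists_coloring_orientation_eq {V : Type u} [Finite V]
    {G : SimpleGraph V} {O : GraphOrientation G} (hO : O.IsAcyclic) :
    ∃ C : G.Coloring Ordinal.{u}, C.orientation = O := by
  have : IsWellFounded V O.dir := ⟨hO.wellFounded⟩
  have rank_ne : ∀ {u v}, G.Adj u v → IsWellFounded.rank O.dir u ≠ IsWellFounded.rank O.dir v :=
    fun huv => ((O.consistent _ _).1 huv).elim (IsWellFounded.rank_lt_of_rel · |>.ne)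
      (IsWellFounded.rank_lt_of_rel · |>.ne')
  refine ⟨SimpleGraph.Coloring.mk _ rank_ne, (GraphOrientation.eq_of_dir_imp fun u v h => ?_).symm⟩
  exact ⟨(O.consistent u v).2 (Or.inl h), IsWellFounded.rank_lt_of_rel h⟩

theorem Fin.swap_lt_swap_of_lt {n : ℕ} {k l p q : Fin n} (hkl : (k : ℕ) + 1 = l) (hpq : p < q)
    (hne : (p, q) ≠ (k, l)) : Equiv.swap k l p < Equiv.swap k l q := by
  simp only [ne_eq, Prod.mk.injEq, Fin.ext_iff] at hne
  rw [Fin.lt_def] at hpq ⊢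
  rw [Equiv.swap_apply_def, Equiv.swap_apply_def]
  split_ifs <;> simp only [Fin.ext_iff] at * <;> omega

namespace Equiv.Perm

variable {n : ℕ}

theorem exists_descent_of_ne_one {ρ : Perm (Fin n)} (hρ : ρ ≠ 1) :
    ∃ (k : Fin n) (hk : (k : ℕ) + 1 < n), ρ ⟨k + 1, hk⟩ < ρ k := by
  cases n with
  | zero => exact absurd (Subsingleton.elim ρ 1) hρ
  | succ m =>
    have : ¬ StrictMono ρ := fun h => hρ (Equiv.ext fun x => h.apply_eq)
    obtain ⟨i, hi⟩ := not_forall.1 (mt Fin.strictMono_iff_lt_succ.2 this)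
    exact ⟨i.castSucc, by simp, (not_lt.1 hi).lt_of_ne (ρ.injective.ne i.castSucc_lt_succ.ne')⟩

theorem mul_swap_symm_apply (π : Perm (Fin n)) (k l w : Fin n) :
    (π * swap k l).symm w = swap k l (π.symm w) := by
  simp [mul_def]

def relInversions (σ τ : Perm (Fin n)) : Finset (Fin n × Fin n) :=
  {p | σ.symm p.1 < σ.symm p.2 ∧ τ.symm p.2 < τ.symm p.1}

end Equiv.Perm

section PermOrientation

variable {n : ℕ} {G : SimpleGraph (Fin n)}

def permOrientation (G : SimpleGraph (Fin n)) (π : Equiv.Perm (Fin n)) : AcycGraphOrientation G :=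
  let C : G.Coloring (Fin n) := .mk π.symm fun h => π.symm.injective.ne (G.ne_of_adj h)
  ⟨C.orientation, C.orientation_isAcyclic⟩

theorem permOrientation_dir {π : Equiv.Perm (Fin n)} {u v : Fin n} :
    (permOrientation G π).1.dir u v ↔ G.Adj u v ∧ π.symm u < π.symm v :=
  Iff.rfl

theorem exists_permOrientation_eq_coloring_orientation {α : Type*} [LinearOrder α]
    (C : G.Coloring α) : ∃ π, (permOrientation G π).1 = C.orientation := by
  refine ⟨Tuple.sort C, (GraphOrientation.eq_of_dir_imp fun u v huv => ?_).symm⟩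
  refine permOrientation_dir.2 ⟨huv.1, (Tuple.monotone_sort C).reflect_lt ?_⟩
  simpa using huv.2

theorem exists_permOrientation_eq (O : AcycGraphOrientation G) : ∃ π, permOrientation G π = O := by
  obtain ⟨C, hC⟩ := O.2.exists_coloring_orientation_eq
  obtain ⟨π, hπ⟩ := exists_permOrientation_eq_coloring_orientation C
  exact ⟨π, Subtype.ext (hπ.trans hC)⟩

end PermOrientation

namespace SwapRel

open Equiv.Perm

variable {n : ℕ} {G : SimpleGraph (Fin n)}

theorem permOrientation_eq {π π' : Equiv.Perm (Fin n)} (h : SwapRel G π π') :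
    permOrientation G π = permOrientation G π' := by
  obtain ⟨k, hk, hna, rfl⟩ := h
  refine Subtype.ext <| GraphOrientation.eq_of_dir_imp fun u v ⟨huv, hlt⟩ => ⟨huv, ?_⟩
  change π.symm u < π.symm v at hlt
  change (π * _).symm u < (π * _).symm v
  rw [mul_swap_symm_apply, mul_swap_symm_apply]
  refine Fin.swap_lt_swap_of_lt rfl hlt fun he => hna ?_
  obtain ⟨hu, hv⟩ := Prod.mk.inj he
  rw [Equiv.symm_apply_eq] at hu hv
  rwa [← hu, ← hv]

theorem exists_relInversions_ssubset {σ τ : Equiv.Perm (Fin n)} (hne : σ ≠ τ)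
    (h : permOrientation G σ = permOrientation G τ) :
    ∃ σ', SwapRel G σ σ' ∧ relInversions σ' τ ⊂ relInversions σ τ := by
  obtain ⟨k, hk, hdesc⟩ :=
    (τ⁻¹ * σ).exists_descent_of_ne_one (by rwa [ne_eq, inv_mul_eq_one, eq_comm])
  set l : Fin n := ⟨k + 1, hk⟩
  have hkl : k < l := Fin.lt_def.2 (Nat.lt_succ_self k)
  change τ.symm (σ l) < τ.symm (σ k) at hdesc
  have hnadj : ¬ G.Adj (σ k) (σ l) := fun hadj => by
    have hdir := congrArg (fun O : AcycGraphOrientation G => O.1.dir (σ k) (σ l)) h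
    simp only [permOrientation_dir, eq_iff_iff, Equiv.symm_apply_apply] at hdir
    exact hdesc.not_gt (hdir.1 ⟨hadj, hkl⟩).2
  refine ⟨σ * Equiv.swap k l, ⟨k, hk, hnadj, rfl⟩, (Finset.ssubset_iff_of_subset ?_).2 ?_⟩
  · rintro ⟨u, v⟩ huv
    simp only [relInversions, Finset.mem_filter, Finset.mem_univ, true_and,
      mul_swap_symm_apply] at huv ⊢
    refine ⟨?_, huv.2⟩
    have hne : (Equiv.swap k l (σ.symm u), Equiv.swap k l (σ.symm v)) ≠ (k, l) := fun he => by
      obtain ⟨hu, hv⟩ := Prod.mk.inj he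
      rw [Equiv.swap_apply_eq_iff, Equiv.swap_apply_left, Equiv.symm_apply_eq] at hu
      rw [Equiv.swap_apply_eq_iff, Equiv.swap_apply_right, Equiv.symm_apply_eq] at hv
      exact hdesc.not_gt (hu ▸ hv ▸ huv.2)
    simpa only [Equiv.swap_apply_self] using Fin.swap_lt_swap_of_lt rfl huv.1 hne
  · refine ⟨(σ k, σ l), ?_, ?_⟩ <;>
      simp [relInversions, mul_swap_symm_apply, hdesc, hkl, hkl.le]

theorem quot_mk_eq_of_permOrientation_eq (σ τ : Equiv.Perm (Fin n))
    (h : permOrientation G σ = permOrientation G τ) :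
    Quot.mk (SwapRel G) σ = Quot.mk (SwapRel G) τ := by
  by_cases hστ : σ = τ
  · rw [hστ]
  obtain ⟨σ', hσσ', hlt⟩ := exists_relInversions_ssubset hστ h
  rw [Quot.sound hσσ']
  exact quot_mk_eq_of_permOrientation_eq σ' τ ((permOrientation_eq hσσ').symm.trans h)
termination_by (relInversions σ τ).card
decreasing_by exact Finset.card_lt_card hlt

end SwapRel

theorem update_classes_biject_acyclic_orientations {n : ℕ} (G : SimpleGraph (Fin n)) :
    ∃ e : Quot (SwapRel G) ≃ AcycGraphOrientation G,
      ∀ π : Equiv.Perm (Fin n),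
        ((e (Quot.mk _ π)).1.dir) = fun u v => G.Adj u v ∧ π.symm u < π.symm v := by
  let toOrientation : Quot (SwapRel G) → AcycGraphOrientation G :=
    Quot.lift (permOrientation G) fun _ _ => SwapRel.permOrientation_eq
  have injective : toOrientation.Injective := by
    rintro ⟨σ⟩ ⟨τ⟩ h
    exact SwapRel.quot_mk_eq_of_permOrientation_eq σ τ h
  have surjective : toOrientation.Surjective := fun O =>
    (exists_permOrientation_eq O).imp' (Quot.mk _) fun _ hπ => hπ
  exact ⟨.ofBijective toOrientation ⟨injective, surjective⟩, fun _ => rfl⟩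
end

section
/- Let Y be a finite simple graph and v a vertex of an acyclic orientation O of Y that is a source (all incident edges directed away from v). Then the orientation obtained from O by reversing all edges incident to v (making v a sink) is again acyclic. -/
theorem click_preserves_acyclicity {V : Type*} {G : SimpleGraph V}
    {O O' : GraphOrientation G} (hO : O.IsAcyclic) (h : Click O O') : O'.IsAcyclic := by
  obtain ⟨v, hsrc, hspec⟩ := h
  have hnov : ∀ w, ¬ O'.dir v w := by
    intro w hw
    rcases (hspec v w).1 hw with ⟨_, h2⟩ | ⟨h1, _, _⟩
    · exact hsrc w h2
    · exact h1 rfl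
  have hedge : ∀ a b, O'.dir a b → b ≠ v → a ≠ v ∧ O.dir a b := by
    intro a b hab hb
    rcases (hspec a b).1 hab with ⟨ha | hbv, h2⟩ | ⟨h1, _, h3⟩
    · subst ha; exact absurd h2 (hsrc b)
    · exact absurd hbv hb
    · exact ⟨h1, h3⟩
  have hv : ∀ b, ¬ Relation.TransGen O'.dir v b := by
    intro b hb
    induction hb with
    | single h => exact hnov _ h
    | tail _ _ ih => exact ih
  have key : ∀ a b, Relation.TransGen O'.dir a b → b ≠ v → a ≠ v ∧ Relation.TransGen O.dir a b := by
    intro a b hab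
    induction hab with
    | single h =>
      intro hb
      obtain ⟨ha, hd⟩ := hedge _ _ h hb
      exact ⟨ha, Relation.TransGen.single hd⟩
    | tail hac hcb ih =>
      intro hb
      obtain ⟨hc, hd⟩ := hedge _ _ hcb hb
      obtain ⟨ha, ht⟩ := ih hc
      exact ⟨ha, ht.tail hd⟩
  intro x hx
  by_cases hxv : x = v
  · exact hv x (hxv ▸ hx)
  · exact hO x (key x x hx hxv).2
end

section
/- A forest (a finite simple graph with no cycles) has exactly one κ-equivalence class of acyclic orientations; that is, any two acyclic orientations of a forest are connected by a sequence of source-to-sink operations. -/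
/-
In a forest every orientation is acyclic, and every edge `uv` is a bridge, so the vertices on
`v`'s side of it form a set `S` joined to the rest only through `uv`. If an orientation `A`
points `uv` out of `S` but the target `B` does not, then `S` has no incoming edges in `A`, so
reversing every edge across the cut of `S` can be done by source-to-sink moves: repeatedly pick a
source of `A` inside `S` and move it. This reverses `uv` and creates no new disagreement with `B`,
so induction on the number of disagreements connects `A` to `B`.
-/

open Relation

namespace GraphOrientation

variable {V : Type*} {G : SimpleGraph V}

@[ext]
lemma ext {O O' : GraphOrientation G} (h : ∀ u v, O.dir u v ↔ O'.dir u v) : O = O' := by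
  obtain ⟨d, _, _⟩ := O
  obtain ⟨d', _, _⟩ := O'
  obtain rfl : d = d' := funext₂ fun u v => propext (h u v)
  rfl

lemma adj_of_dir (O : GraphOrientation G) {u v : V} (h : O.dir u v) : G.Adj u v :=
  (O.consistent u v).2 (Or.inl h)

def ofRank {α : Type*} [LinearOrder α] (f : V → α) (hf : Function.Injective f) :
    GraphOrientation G where
  dir a b := G.Adj a b ∧ f a < f b
  consistent a b := by
    refine ⟨fun h => ?_, by rintro (⟨h, -⟩ | ⟨h, -⟩) <;> simp [h, h.symm]⟩
    rcases lt_or_gt_of_ne (hf.ne h.ne) with hab | hab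
    exacts [Or.inl ⟨h, hab⟩, Or.inr ⟨h.symm, hab⟩]
  asymm _ _ h h' := lt_asymm h.2 h'.2

lemma isAcyclic_ofRank {α : Type*} [LinearOrder α] (f : V → α) (hf : Function.Injective f) :
    (ofRank (G := G) f hf).IsAcyclic := fun v hv => by
  have := TransGen.lift f (fun _ _ h => h.2) v v hv
  rw [transGen_eq_self] at this
  exact lt_irrefl _ this

instance : Nonempty (AcycGraphOrientation G) :=
  ⟨⟨ofRank embeddingToCardinal embeddingToCardinal.injective, isAcyclic_ofRank _ _⟩⟩

lemma _root_.Click.isAcyclic {O O' : GraphOrientation G} (h : Click O O') (hO : O.IsAcyclic) :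
    O'.IsAcyclic := by
  obtain ⟨v, hsrc, hdir⟩ := h
  have ne_of_dir : ∀ a b, O'.dir a b → a ≠ v := by
    rintro a b hab rfl
    rcases (hdir a b).1 hab with ⟨-, hba⟩ | ⟨hne, -⟩
    exacts [hsrc b hba, hne rfl]
  have dir_of_dir : ∀ a b, O'.dir a b → b ≠ v → O.dir a b := fun a b hab hb => by
    rcases (hdir a b).1 hab with ⟨hav | hbv, -⟩ | ⟨-, -, h⟩
    exacts [absurd hav (ne_of_dir a b hab), absurd hbv hb, h]
  -- `v` is a sink of `O'`, so a cycle of `O'` avoids it and is already a cycle of `O`.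
  have transGen_of : ∀ a b, TransGen O'.dir a b → b ≠ v → TransGen O.dir a b := by
    intro a b hab
    induction hab with
    | single h => exact fun hb => .single (dir_of_dir _ _ h hb)
    | tail _ hcb ih => exact fun hb => .tail (ih (ne_of_dir _ _ hcb)) (dir_of_dir _ _ hcb hb)
  intro w hw
  obtain ⟨c, hwc, -⟩ := TransGen.head'_iff.mp hw
  exact hO w (transGen_of w w hw (ne_of_dir w c hwc))

def flipCut (O : GraphOrientation G) (S : Set V) : GraphOrientation G where
  dir a b := ((a ∈ S ↔ b ∈ S) ∧ O.dir a b) ∨ (¬(a ∈ S ↔ b ∈ S) ∧ O.dir b a)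
  consistent u v := by
    have := O.consistent u v
    by_cases u ∈ S ↔ v ∈ S <;> tauto
  asymm u v := by
    have := O.asymm u v
    have := O.asymm v u
    by_cases u ∈ S ↔ v ∈ S <;> tauto

lemma flipCut_dir_of_iff {O : GraphOrientation G} {S : Set V} {a b : V} (h : a ∈ S ↔ b ∈ S) :
    (O.flipCut S).dir a b ↔ O.dir a b := by
  simp only [flipCut]; tauto

lemma flipCut_dir_of_not_iff {O : GraphOrientation G} {S : Set V} {a b : V}
    (h : ¬(a ∈ S ↔ b ∈ S)) : (O.flipCut S).dir a b ↔ O.dir b a := by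
  simp only [flipCut]; tauto

@[simp]
lemma flipCut_empty (O : GraphOrientation G) : O.flipCut ∅ = O := by
  ext a b
  exact flipCut_dir_of_iff (by simp)

lemma flipCut_flipCut (O : GraphOrientation G) (S T : Set V) :
    (O.flipCut T).flipCut S = O.flipCut (symmDiff T S) := by
  ext a b
  simp only [flipCut, Set.mem_symmDiff]
  by_cases a ∈ S <;> by_cases b ∈ S <;> by_cases a ∈ T <;> by_cases b ∈ T <;> simp_all

lemma click_flipCut_singleton (O : GraphOrientation G) {v : V} (hsrc : ∀ u, ¬ O.dir u v) :
    Click O (O.flipCut {v}) := by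
  refine ⟨v, hsrc, fun u w => ?_⟩
  have := hsrc u
  have := hsrc w
  by_cases hu : u = v <;> by_cases hw : w = v
  · subst hu hw
    rw [flipCut_dir_of_iff Iff.rfl]
    tauto
  · rw [flipCut_dir_of_not_iff (by simp [hu, hw])]
    tauto
  · rw [flipCut_dir_of_not_iff (by simp [hu, hw])]
    tauto
  · rw [flipCut_dir_of_iff (by simp [hu, hw])]
    tauto

def IsPredClosed (O : GraphOrientation G) (S : Set V) : Prop :=
  ∀ ⦃x y⦄, O.dir x y → y ∈ S → x ∈ S

lemma IsPredClosed.mem_of_reflTransGen {O : GraphOrientation G} {S : Set V}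
    (hS : O.IsPredClosed S) {a b : V} (h : ReflTransGen O.dir a b) (hb : b ∈ S) : a ∈ S := by
  induction h using ReflTransGen.head_induction_on with
  | refl => exact hb
  | head hac _ ih => exact hS hac ih

lemma IsPredClosed.diff_singleton {O : GraphOrientation G} {S : Set V} (hS : O.IsPredClosed S)
    {v : V} (hsrc : ∀ u, ¬ O.dir u v) : (O.flipCut {v}).IsPredClosed (S \ {v}) := by
  rintro x y hxy ⟨hyS, hyv : y ≠ v⟩
  by_cases hxv : x = v
  · subst hxv
    exact absurd ((flipCut_dir_of_not_iff (by simp [hyv])).1 hxy) (hsrc y)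
  · exact ⟨hS ((flipCut_dir_of_iff (by simp [hxv, hyv])).1 hxy) hyS, hxv⟩

lemma IsAcyclic.exists_source_mem [Finite V] {O : GraphOrientation G} (hO : O.IsAcyclic)
    {S : Set V} (hne : S.Nonempty) (hS : O.IsPredClosed S) : ∃ v ∈ S, ∀ u, ¬ O.dir u v := by
  have : Std.Irrefl (TransGen O.dir) := ⟨hO⟩
  obtain ⟨v, hvS, hmin⟩ := (Finite.wellFounded_of_trans_of_irrefl (TransGen O.dir)).has_min S hne
  exact ⟨v, hvS, fun u hu => hmin u (hS hu hvS) (.single hu)⟩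

theorem reflTransGen_click_flipCut [Finite V] {O : GraphOrientation G} (hO : O.IsAcyclic)
    {S : Set V} (hS : O.IsPredClosed S) : ReflTransGen Click O (O.flipCut S) := by
  rcases S.eq_empty_or_nonempty with rfl | hne
  · rw [flipCut_empty]
  · obtain ⟨v, hvS, hsrc⟩ := hO.exists_source_mem hne hS
    have hclick := click_flipCut_singleton O hsrc
    have hrest := reflTransGen_click_flipCut (hclick.isAcyclic hO) (hS.diff_singleton hsrc)
    rw [flipCut_flipCut, symmDiff_sdiff_eq_sup, sup_eq_right.2 (Set.singleton_subset_iff.2 hvS)]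
      at hrest
    exact .head hclick hrest
termination_by S.ncard
decreasing_by exact Set.ncard_sdiff_singleton_lt_of_mem hvS S.toFinite

end GraphOrientation

namespace SimpleGraph

variable {V : Type*} {G : SimpleGraph V} {u v : V}

def edgeSide (G : SimpleGraph V) (u v : V) : Set V :=
  {w | (G.deleteEdges {s(u, v)}).Reachable w v}

lemma mem_edgeSide_self (G : SimpleGraph V) (u v : V) : v ∈ G.edgeSide u v :=
  Reachable.refl v

lemma IsAcyclic.not_mem_edgeSide (hG : G.IsAcyclic) (huv : G.Adj u v) : u ∉ G.edgeSide u v :=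
  isBridge_iff.mp (isAcyclic_iff_forall_adj_isBridge.mp hG huv)

lemma eq_of_adj_of_mem_edgeSide {a b : V} (hab : G.Adj a b) (ha : a ∈ G.edgeSide u v)
    (hb : b ∉ G.edgeSide u v) : a = v ∧ b = u := by
  by_contra hne
  have hba : (G.deleteEdges {s(u, v)}).Adj b a := by
    rw [deleteEdges_adj, Set.mem_singleton_iff, Sym2.eq_iff]
    refine ⟨hab.symm, ?_⟩
    rintro (⟨rfl, rfl⟩ | ⟨rfl, -⟩)
    exacts [hne ⟨rfl, rfl⟩, hb (G.mem_edgeSide_self u b)]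
  exact hb (hba.reachable.trans ha)

end SimpleGraph

namespace GraphOrientation

variable {V : Type*} {G : SimpleGraph V} {u v : V}

lemma isPredClosed_edgeSide {O : GraphOrientation G} (h : O.dir v u) :
    O.IsPredClosed (G.edgeSide u v) := by
  intro x y hxy hy
  by_contra hx
  obtain ⟨rfl, rfl⟩ := G.eq_of_adj_of_mem_edgeSide (O.adj_of_dir hxy).symm hy hx
  exact O.asymm _ _ h hxy

lemma _root_.SimpleGraph.IsAcyclic.orientation_isAcyclic (hG : G.IsAcyclic)
    (O : GraphOrientation G) : O.IsAcyclic := by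
  intro w hw
  obtain ⟨y, hwy, hyw⟩ := TransGen.head'_iff.mp hw
  exact hG.not_mem_edgeSide (O.adj_of_dir hwy).symm
    ((isPredClosed_edgeSide hwy).mem_of_reflTransGen hyw (G.mem_edgeSide_self y w))

def disagreements (A B : GraphOrientation G) : Set (V × V) :=
  {p | A.dir p.1 p.2 ∧ B.dir p.2 p.1}

lemma exists_dir_dir_of_ne {A B : GraphOrientation G} (h : A ≠ B) :
    ∃ v u, A.dir v u ∧ B.dir u v := by
  contrapose! h
  ext a b
  constructor
  · intro hab
    exact ((B.consistent a b).1 (A.adj_of_dir hab)).resolve_right (h a b hab)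
  · intro hab
    exact ((A.consistent a b).1 (B.adj_of_dir hab)).resolve_right fun hba => h b a hba hab

lemma disagreements_flipCut_edgeSide_ssubset (hG : G.IsAcyclic) {A B : GraphOrientation G}
    (hA : A.dir v u) (hB : B.dir u v) :
    (A.flipCut (G.edgeSide u v)).disagreements B ⊂ A.disagreements B := by
  set S := G.edgeSide u v
  refine ⟨?_, fun hsub => ?_⟩
  · rintro ⟨a, b⟩ ⟨hab, hba⟩
    by_cases hS : a ∈ S ↔ b ∈ S
    · exact ⟨(flipCut_dir_of_iff hS).1 hab, hba⟩
    have hab' := (flipCut_dir_of_not_iff hS).1 hab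
    by_cases haS : a ∈ S
    · obtain ⟨rfl, rfl⟩ := G.eq_of_adj_of_mem_edgeSide (A.adj_of_dir hab').symm haS (by tauto)
      exact (A.asymm _ _ hA hab').elim
    · obtain ⟨rfl, rfl⟩ := G.eq_of_adj_of_mem_edgeSide (A.adj_of_dir hab') (by tauto) haS
      exact (B.asymm _ _ hB hba).elim
  · have hcross : ¬(v ∈ S ↔ u ∈ S) := fun h =>
      hG.not_mem_edgeSide (B.adj_of_dir hB) (h.1 (G.mem_edgeSide_self u v))
    exact A.asymm _ _ hA ((flipCut_dir_of_not_iff hcross).1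
      (hsub (show (v, u) ∈ A.disagreements B from ⟨hA, hB⟩)).1)

end GraphOrientation

open GraphOrientation in
theorem SimpleGraph.IsAcyclic.reflTransGen_click {V : Type*} [Finite V] {G : SimpleGraph V}
    (hG : G.IsAcyclic) (A B : GraphOrientation G) : ReflTransGen Click A B := by
  by_cases hAB : A = B
  · rw [hAB]
  obtain ⟨v, u, hA, hB⟩ := exists_dir_dir_of_ne hAB
  have hfewer := disagreements_flipCut_edgeSide_ssubset hG hA hB
  exact (reflTransGen_click_flipCut (hG.orientation_isAcyclic A) (isPredClosed_edgeSide hA)).trans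
    (hG.reflTransGen_click _ B)
termination_by (A.disagreements B).ncard
decreasing_by exact Set.ncard_lt_ncard hfewer (Set.toFinite _)

lemma quot_mk_eq_of_reflTransGen_click {V : Type*} {G : SimpleGraph V}
    {A B : GraphOrientation G} (h : ReflTransGen Click A B) (hA : A.IsAcyclic)
    (hB : B.IsAcyclic) :
    Quot.mk (fun X Y : AcycGraphOrientation G => Click X.1 Y.1) ⟨A, hA⟩ = Quot.mk _ ⟨B, hB⟩ := by
  induction h using ReflTransGen.head_induction_on with
  | refl => rfl
  | head hAC _ ih =>
    exact (Quot.sound (r := fun X Y : AcycGraphOrientation G => Click X.1 Y.1) (a := ⟨_, hA⟩)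
      (b := ⟨_, hAC.isAcyclic hA⟩) hAC).trans (ih _)

theorem kappa_forest {V : Type*} [Fintype V] (G : SimpleGraph V)
    (hG : G.IsAcyclic) : kappa G = 1 := by
  rw [kappa, Nat.card_eq_one_iff_unique]
  refine ⟨⟨fun a b => ?_⟩, .map (Quot.mk _) inferInstance⟩
  induction a using Quot.ind with | mk A =>
  induction b using Quot.ind with | mk B =>
  exact quot_mk_eq_of_reflTransGen_click (hG.reflTransGen_click A.1 B.1) A.2 B.2
end

section
/- Let Y be a finite simple graph with at least one edge, and let Y ⊕ v be the vertex join of Y with a new vertex v (v adjacent to every vertex of Y). Then κ(Y ⊕ v) = α(Y), the number of acyclic orientations of Y. In particular, each κ-equivalence class of acyclic orientations of Y ⊕ v contains exactly one acyclic orientation in which v is a source. -/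
/-- The vertex join `Y ⊕ v`: a new vertex (`none`) adjacent to every vertex of `Y`. -/
def joinGraph {V : Type*} (G : SimpleGraph V) : SimpleGraph (Option V) :=
  SimpleGraph.fromRel (fun x y =>
    match x, y with
    | none, some _ => True
    | some a, some b => G.Adj a b
    | _, _ => False)

def KappaEquiv {V : Type*} {G : SimpleGraph V} (O O' : AcycGraphOrientation G) : Prop :=
  Relation.EqvGen (fun A B : AcycGraphOrientation G => Click A.1 B.1) O O'

namespace KVJ
open Relation

variable {V : Type*} {G : SimpleGraph V}

lemma GraphOrientation.ext' {O O' : GraphOrientation G} (h : O.dir = O'.dir) : O = O' := by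
  cases O; cases O'; simp_all

lemma dir_irrefl (O : GraphOrientation G) (v : V) : ¬ O.dir v v :=
  fun h => O.asymm v v h h

lemma adj_of_dir (O : GraphOrientation G) {u v : V} (h : O.dir u v) : G.Adj u v :=
  (O.consistent u v).2 (Or.inl h)

/-- The orientation obtained by clicking a source `v`. -/
def clickAt (O : GraphOrientation G) (v : V) (hv : ∀ u, ¬ O.dir u v) :
    GraphOrientation G where
  dir u w := ((u = v ∨ w = v) ∧ O.dir w u) ∨ (u ≠ v ∧ w ≠ v ∧ O.dir u w)
  consistent u w := by
    have h1 := O.consistent u w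
    have h2 := O.asymm u w
    have h3 := O.asymm w u
    have h4 := hv u
    have h5 := hv w
    by_cases hu : u = v <;> by_cases hw : w = v <;> subst_eqs <;> tauto
  asymm u w := by
    have h2 := O.asymm u w
    have h3 := O.asymm w u
    tauto

lemma click_clickAt (O : GraphOrientation G) (v : V) (hv : ∀ u, ¬ O.dir u v) :
    Click O (clickAt O v hv) :=
  ⟨v, hv, fun _ _ => Iff.rfl⟩

lemma clickAt_sink (O : GraphOrientation G) (v : V) (hv : ∀ u, ¬ O.dir u v) (w : V) :
    ¬ (clickAt O v hv).dir v w := by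
  rintro (⟨_, h⟩ | ⟨h, _, _⟩)
  · exact hv w h
  · exact h rfl

lemma clickAt_acyclic (O : GraphOrientation G) (v : V) (hv : ∀ u, ¬ O.dir u v)
    (hO : O.IsAcyclic) : (clickAt O v hv).IsAcyclic := by
  have key : ∀ x y, TransGen (clickAt O v hv).dir x y → y ≠ v →
      TransGen O.dir x y ∧ x ≠ v := by
    intro x y h
    induction h with
    | single h =>
      intro hy
      rcases h with ⟨hor, hd⟩ | ⟨hx, _, hd⟩
      · rcases hor with h | h
        · exact absurd (h ▸ hd) (hv _)
        · exact absurd h hy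
      · exact ⟨TransGen.single hd, hx⟩
    | tail h hstep ih =>
      intro hy
      rcases hstep with ⟨hor, hd⟩ | ⟨hb, _, hd⟩
      · rcases hor with h | h
        · exact absurd (h ▸ hd) (hv _)
        · exact absurd h hy
      · obtain ⟨h1, h2⟩ := ih hb
        exact ⟨h1.tail hd, h2⟩
  intro x hx
  by_cases hxv : x = v
  · obtain ⟨b, hb, _⟩ := (Relation.TransGen.head'_iff).1 hx
    rw [hxv] at hb
    exact clickAt_sink O v hv b hb
  · exact hO x (key x x hx hxv).1

lemma join_adj_none (a : V) : (joinGraph G).Adj none (some a) := by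
  simp [joinGraph, SimpleGraph.fromRel_adj]

lemma join_adj_some {a b : V} : (joinGraph G).Adj (some a) (some b) ↔ G.Adj a b := by
  constructor
  · intro h
    rw [joinGraph, SimpleGraph.fromRel_adj] at h
    rcases h.2 with h | h
    · exact h
    · exact h.symm
  · intro h
    rw [joinGraph, SimpleGraph.fromRel_adj]
    exact ⟨by simpa using h.ne, Or.inl h⟩

lemma dir_none_or (O : GraphOrientation (joinGraph G)) (a : V) :
    O.dir none (some a) ∨ O.dir (some a) none :=
  (O.consistent none (some a)).1 (join_adj_none a)

/-- The click-invariant: the induced orientation of `G` obtained from the cyclic order of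
each triangle through `none`. -/
def phi (O : GraphOrientation (joinGraph G)) : GraphOrientation G where
  dir a b := G.Adj a b ∧ ((O.dir none (some a) ∧ O.dir (some b) none) ∨
    (O.dir (some a) (some b) ∧ (O.dir none (some a) ↔ O.dir none (some b))))
  consistent a b := by
    constructor
    · intro h
      by_cases Pa : O.dir none (some a) <;> by_cases Pb : O.dir none (some b)
      · rcases (O.consistent _ _).1 (join_adj_some.2 h) with hd | hd
        · exact Or.inl ⟨h, Or.inr ⟨hd, iff_of_true Pa Pb⟩⟩
        · exact Or.inr ⟨h.symm, Or.inr ⟨hd, iff_of_true Pb Pa⟩⟩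
      · have hbn : O.dir (some b) none := (dir_none_or O b).resolve_left Pb
        exact Or.inl ⟨h, Or.inl ⟨Pa, hbn⟩⟩
      · have han : O.dir (some a) none := (dir_none_or O a).resolve_left Pa
        exact Or.inr ⟨h.symm, Or.inl ⟨Pb, han⟩⟩
      · rcases (O.consistent _ _).1 (join_adj_some.2 h) with hd | hd
        · exact Or.inl ⟨h, Or.inr ⟨hd, iff_of_false Pa Pb⟩⟩
        · exact Or.inr ⟨h.symm, Or.inr ⟨hd, iff_of_false Pb Pa⟩⟩
    · rintro (⟨h, _⟩ | ⟨h, _⟩)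
      · exact h
      · exact h.symm
  asymm a b := by
    rintro ⟨hab, h⟩ ⟨hba, h'⟩
    rcases h with ⟨Pa, hbn⟩ | ⟨hd, hiff⟩ <;> rcases h' with ⟨Pb, han⟩ | ⟨hd', hiff'⟩
    · exact O.asymm none (some a) Pa han
    · exact O.asymm (some b) none hbn (hiff'.2 Pa)
    · exact O.asymm (some a) none han (hiff.2 Pb)
    · exact O.asymm _ _ hd hd'

lemma phi_step (O : GraphOrientation (joinGraph G)) {a b : V} (h : (phi O).dir a b) :
    (O.dir (some a) (some b) ∧ (O.dir none (some a) ↔ O.dir none (some b))) ∨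
    (O.dir none (some a) ∧ ¬ O.dir none (some b)) := by
  rcases h.2 with ⟨Pa, hbn⟩ | hr
  · exact Or.inr ⟨Pa, fun Pb => O.asymm _ _ Pb hbn⟩
  · exact Or.inl hr

lemma phi_acyclic (O : GraphOrientation (joinGraph G)) (hO : O.IsAcyclic) :
    (phi O).IsAcyclic := by
  have key : ∀ a b : V, Relation.TransGen (phi O).dir a b →
      (Relation.TransGen O.dir (some a) (some b) ∧
        (O.dir none (some a) ↔ O.dir none (some b))) ∨
      (O.dir none (some a) ∧ ¬ O.dir none (some b)) := by
    intro a b h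
    induction h with
    | single h =>
      rcases phi_step O h with ⟨h1, h2⟩ | h
      · exact Or.inl ⟨Relation.TransGen.single h1, h2⟩
      · exact Or.inr h
    | tail h hstep ih =>
      rcases phi_step O hstep with ⟨h1, h2⟩ | ⟨h1, h2⟩
      · rcases ih with ⟨ih1, ih2⟩ | ⟨ih1, ih2⟩
        · exact Or.inl ⟨ih1.tail h1, ih2.trans h2⟩
        · exact Or.inr ⟨ih1, fun hc => ih2 (h2.2 hc)⟩
      · rcases ih with ⟨ih1, ih2⟩ | ⟨ih1, ih2⟩
        · exact Or.inr ⟨ih2.2 h1, h2⟩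
        · exact absurd h1 ih2
  intro a hc
  rcases key a a hc with ⟨h1, _⟩ | ⟨h1, h2⟩
  · exact hO _ h1
  · exact h2 h1

/-- The direction function extending an orientation of `G` with `none` as a source. -/
def psidir (A : GraphOrientation G) : Option V → Option V → Prop
  | some a, some b => A.dir a b
  | none, some _ => True
  | _, _ => False

/-- The extension of an orientation of `G` to the join, with `none` as a source. -/
def psi (A : GraphOrientation G) : GraphOrientation (joinGraph G) where
  dir := psidir A
  consistent x y := by
    cases x <;> cases y <;>
      simp [psidir, join_adj_none, (join_adj_none _).symm, join_adj_some,
        SimpleGraph.irrefl]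
    · exact A.consistent _ _
  asymm x y := by
    cases x <;> cases y <;> simp [psidir]
    exact A.asymm _ _

lemma psi_acyclic (A : GraphOrientation G) (hA : A.IsAcyclic) : (psi A).IsAcyclic := by
  have key : ∀ x y, Relation.TransGen (psi A).dir x y →
      (∃ b, y = some b) ∧ (∀ a b, x = some a → y = some b → Relation.TransGen A.dir a b) := by
    intro x y h
    induction h with
    | single h =>
      rename_i y'
      cases x with
      | none =>
        cases y' with
        | none => exact absurd h (by simp [psi, psidir])
        | some c => exact ⟨⟨c, rfl⟩, by rintro a b ⟨⟩⟩
      | some a0 =>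
        cases y' with
        | none => exact absurd h (by simp [psi, psidir])
        | some c =>
          refine ⟨⟨c, rfl⟩, ?_⟩
          rintro a b ha hb
          injection ha with ha
          injection hb with hb
          subst ha; subst hb
          exact Relation.TransGen.single h
    | tail h hstep ih =>
      rename_i m y'
      cases m with
      | none =>
        obtain ⟨⟨c, hc⟩, -⟩ := ih
        cases hc
      | some m' =>
        cases y' with
        | none => exact absurd hstep (by simp [psi, psidir])
        | some c =>
          refine ⟨⟨c, rfl⟩, ?_⟩
          rintro a b ha hb
          injection hb with hb
          subst ha
          have hd : A.dir m' c := hstep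
          exact hb ▸ ((ih.2 a m' rfl rfl).tail hd)
  intro x hx
  obtain ⟨⟨b, hb⟩, h2⟩ := key x x hx
  subst hb
  exact hA b (h2 b b rfl rfl)

lemma psi_source (A : GraphOrientation G) (u : Option V) : ¬ (psi A).dir u none := by
  cases u <;> simp [psi, psidir]

lemma phi_psi (A : GraphOrientation G) : phi (psi A) = A := by
  apply GraphOrientation.ext'
  funext a b
  apply propext
  show G.Adj a b ∧ _ ↔ _
  constructor
  · rintro ⟨hab, (⟨_, h⟩ | ⟨h, _⟩)⟩
    · exact (h : False).elim
    · exact h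
  · intro h
    exact ⟨adj_of_dir A h, Or.inr ⟨h, Iff.rfl⟩⟩

lemma psi_phi (O : GraphOrientation (joinGraph G)) (hs : ∀ u, ¬ O.dir u none) :
    psi (phi O) = O := by
  have hP : ∀ a : V, O.dir none (some a) :=
    fun a => (dir_none_or O a).resolve_right (hs _)
  apply GraphOrientation.ext'
  funext x y
  apply propext
  cases x <;> cases y <;> simp only [psi, psidir]
  · simpa using (dir_irrefl O none)
  · simpa using hP _
  · simpa using hs _
  · rename_i a b
    show (phi O).dir a b ↔ _
    constructor
    · intro h
      rcases phi_step O h with ⟨h1, _⟩ | ⟨_, h2⟩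
      · exact h1
      · exact absurd (hP b) h2
    · intro h
      exact ⟨join_adj_some.1 (adj_of_dir O h), Or.inr ⟨h, iff_of_true (hP a) (hP b)⟩⟩

lemma phi_click {O O' : GraphOrientation (joinGraph G)} (h : Click O O') : phi O = phi O' := by
  obtain ⟨s, hs, hd⟩ := h
  apply GraphOrientation.ext'
  funext a b
  apply propext
  show G.Adj a b ∧ _ ↔ G.Adj a b ∧ _
  by_cases hab : G.Adj a b
  swap
  · constructor <;> (rintro ⟨h, -⟩; exact absurd h hab)
  have hne : a ≠ b := hab.ne
  have hor := (O.consistent (some a) (some b)).1 (join_adj_some.2 hab)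
  cases s with
  | none =>
    have e1 : ¬ O.dir (some a) none := hs _
    have e2 : ¬ O.dir (some b) none := hs _
    have p1 : O.dir none (some a) := (dir_none_or O a).resolve_right e1
    have p2 : O.dir none (some b) := (dir_none_or O b).resolve_right e2
    have E1 : O'.dir none (some a) ↔ O.dir (some a) none := by rw [hd]; simp
    have E2 : O'.dir none (some b) ↔ O.dir (some b) none := by rw [hd]; simp
    have E3 : O'.dir (some a) (some b) ↔ O.dir (some a) (some b) := by rw [hd]; simp
    have E4 : O'.dir (some b) none ↔ O.dir none (some b) := by rw [hd]; simp
    rw [E1, E2, E3, E4]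
    tauto
  | some c =>
    by_cases hca : c = a
    · subst hca
      have pa : ¬ O.dir none (some c) := hs none
      have hcn : O.dir (some c) none := (dir_none_or O c).resolve_left pa
      have r1 : O.dir (some c) (some b) := hor.resolve_right (hs _)
      have rba : ¬ O.dir (some b) (some c) := hs _
      have hb_as : O.dir none (some b) → ¬ O.dir (some b) none := O.asymm _ _
      have hb_or := dir_none_or O b
      have E1 : O'.dir none (some c) ↔ True := by rw [hd]; simp [hcn]
      have E2 : O'.dir none (some b) ↔ O.dir none (some b) := by
        rw [hd]; simp [Ne.symm hne]
      have E3 : O'.dir (some c) (some b) ↔ O.dir (some b) (some c) := by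
        rw [hd]; simp
      have E4 : O'.dir (some b) none ↔ O.dir (some b) none := by
        rw [hd]; simp [Ne.symm hne]
      rw [E1, E2, E3, E4]
      tauto
    · by_cases hcb : c = b
      · subst hcb
        have pb : ¬ O.dir none (some c) := hs none
        have hcn : O.dir (some c) none := (dir_none_or O c).resolve_left pb
        have r1 : ¬ O.dir (some a) (some c) := hs _
        have rba : O.dir (some c) (some a) := hor.resolve_left r1
        have E1 : O'.dir none (some a) ↔ O.dir none (some a) := by
          rw [hd]; simp [hne]
        have E2 : O'.dir none (some c) ↔ True := by rw [hd]; simp [hcn]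
        have E3 : O'.dir (some a) (some c) ↔ O.dir (some c) (some a) := by
          rw [hd]; simp
        have E4 : O'.dir (some c) none ↔ O.dir none (some c) := by
          rw [hd]; simp
        rw [E1, E2, E3, E4]
        tauto
      · have E1 : O'.dir none (some a) ↔ O.dir none (some a) := by
          rw [hd]; simp [Ne.symm hca]
        have E2 : O'.dir none (some b) ↔ O.dir none (some b) := by
          rw [hd]; simp [Ne.symm hcb]
        have E3 : O'.dir (some a) (some b) ↔ O.dir (some a) (some b) := by
          rw [hd]; simp [Ne.symm hca, Ne.symm hcb]
        have E4 : O'.dir (some b) none ↔ O.dir (some b) none := by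
          rw [hd]; simp [Ne.symm hcb]
        rw [E1, E2, E3, E4]

lemma exists_min_source {W : Type*} [Finite W] (r : W → W → Prop)
    (hr : ∀ x, ¬ Relation.TransGen r x x) (u : W) :
    ∃ s, Relation.ReflTransGen r s u ∧ ∀ x, ¬ r x s := by
  haveI : IsTrans W (Relation.TransGen r) := inferInstance
  haveI : IsIrrefl W (Relation.TransGen r) := ⟨hr⟩
  obtain ⟨s, hs, hmin⟩ := (Finite.wellFounded_of_trans_of_irrefl
    (Relation.TransGen r)).has_min {s | Relation.ReflTransGen r s u}
    ⟨u, Relation.ReflTransGen.refl⟩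
  exact ⟨s, hs, fun x hx => hmin x (Relation.ReflTransGen.head hx hs)
    (Relation.TransGen.single hx)⟩

lemma exists_rep [Fintype V] (O : AcycGraphOrientation (joinGraph G)) :
    ∃ O' : AcycGraphOrientation (joinGraph G),
      Relation.EqvGen (fun A B : AcycGraphOrientation (joinGraph G) => Click A.1 B.1) O O' ∧
      ∀ u, ¬ O'.1.dir u none := by
  suffices H : ∀ (n : ℕ) (O : AcycGraphOrientation (joinGraph G)),
      {u | O.1.dir u none}.ncard = n →
      ∃ O' : AcycGraphOrientation (joinGraph G),
        Relation.EqvGen (fun A B : AcycGraphOrientation (joinGraph G) => Click A.1 B.1) O O' ∧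
        ∀ u, ¬ O'.1.dir u none by
    exact H _ O rfl
  intro n
  induction n using Nat.strong_induction_on with
  | _ n ih =>
    intro O hn
    rcases Set.eq_empty_or_nonempty {u | O.1.dir u none} with he | ⟨u₀, hu₀⟩
    · exact ⟨O, Relation.EqvGen.refl O,
        fun u hu => (Set.eq_empty_iff_forall_notMem.1 he u) hu⟩
    · obtain ⟨s, hsu, hs⟩ := exists_min_source O.1.dir O.2 u₀
      have hsn : s ≠ none := by
        rintro rfl
        exact O.2 none (Relation.TransGen.tail' hsu hu₀)
      have hsd : O.1.dir s none := by
        cases s with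
        | none => exact absurd rfl hsn
        | some c => exact (dir_none_or O.1 c).resolve_left (hs none)
      have hO₂a : (clickAt O.1 s hs).IsAcyclic := clickAt_acyclic _ _ _ O.2
      have hset : {u | (clickAt O.1 s hs).dir u none} = {u | O.1.dir u none} \ {s} := by
        ext u
        simp only [Set.mem_setOf_eq, Set.mem_diff, Set.mem_singleton_iff]
        constructor
        · rintro (⟨hor, hdd⟩ | ⟨h1, _, h3⟩)
          · rcases hor with rfl | h
            · exact absurd hdd (hs none)
            · exact absurd h.symm hsn
          · exact ⟨h3, h1⟩
        · rintro ⟨hdd, hu⟩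
          exact Or.inr ⟨hu, fun h => hsn h.symm, hdd⟩
      have hlt : {u | (clickAt O.1 s hs).dir u none}.ncard < n := by
        rw [hset, ← hn]
        exact Set.ncard_diff_singleton_lt_of_mem hsd (Set.toFinite _)
      obtain ⟨O', h1, h2⟩ := ih _ hlt ⟨clickAt O.1 s hs, hO₂a⟩ rfl
      exact ⟨O', Relation.EqvGen.trans _ _ _
        (Relation.EqvGen.rel _ _ (click_clickAt O.1 s hs)) h1, h2⟩

/-- The invariant on acyclic orientations. -/
def phiA (O : AcycGraphOrientation (joinGraph G)) : AcycGraphOrientation G :=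
  ⟨phi O.1, phi_acyclic O.1 O.2⟩

lemma phiA_eqv {O O' : AcycGraphOrientation (joinGraph G)} (h : KappaEquiv O O') :
    phiA O = phiA O' := by
  induction h with
  | rel _ _ h => exact Subtype.ext (phi_click h)
  | refl _ => rfl
  | symm _ _ _ ih => exact ih.symm
  | trans _ _ _ _ _ ih1 ih2 => exact ih1.trans ih2

/-- The bijection between κ-classes of the join and acyclic orientations of `G`. -/
noncomputable def join_equiv [Fintype V] (G : SimpleGraph V) :
    Quot (fun A B : AcycGraphOrientation (joinGraph G) => Click A.1 B.1) ≃
      AcycGraphOrientation G where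
  toFun := Quot.lift phiA (fun _ _ h => phiA_eqv (Relation.EqvGen.rel _ _ h))
  invFun A := Quot.mk _ ⟨psi A.1, psi_acyclic A.1 A.2⟩
  left_inv := by
    apply Quot.ind
    intro O
    obtain ⟨O', h1, h2⟩ := exists_rep O
    have e1 : phiA O = phiA O' := phiA_eqv h1
    have e2 : psi (phiA O).1 = O'.1 := by
      rw [show (phiA O).1 = phi O'.1 from congrArg Subtype.val e1]
      exact psi_phi O'.1 h2
    show Quot.mk _ (⟨psi (phiA O).1, psi_acyclic _ (phiA O).2⟩ :
      AcycGraphOrientation (joinGraph G)) = Quot.mk _ O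
    rw [show (⟨psi (phiA O).1, psi_acyclic _ (phiA O).2⟩ : AcycGraphOrientation (joinGraph G))
      = O' from Subtype.ext e2]
    exact (Quot.eqvGen_sound h1).symm
  right_inv A := Subtype.ext (phi_psi A.1)

end KVJ

theorem kappa_vertex_join {V : Type*} [Fintype V] (G : SimpleGraph V)
    (hne : ∃ u v, G.Adj u v) :
    kappa (joinGraph G) = Nat.card (AcycGraphOrientation G) ∧
    ∀ O : AcycGraphOrientation (joinGraph G),
      ∃! O' : AcycGraphOrientation (joinGraph G),
        KappaEquiv O O' ∧ ∀ u, ¬ O'.1.dir u none := by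
  constructor
  · unfold kappa
    exact Nat.card_congr (KVJ.join_equiv G)
  · intro O
    obtain ⟨O', h1, h2⟩ := KVJ.exists_rep O
    refine ⟨O', ⟨h1, h2⟩, ?_⟩
    rintro y ⟨hy1, hy2⟩
    have e : KVJ.phiA y = KVJ.phiA O' := (KVJ.phiA_eqv hy1).symm.trans (KVJ.phiA_eqv h1)
    apply Subtype.ext
    calc y.1 = KVJ.psi (KVJ.phi y.1) := (KVJ.psi_phi y.1 hy2).symm
      _ = KVJ.psi (KVJ.phi O'.1) := by
          rw [show KVJ.phi y.1 = KVJ.phi O'.1 from congrArg Subtype.val e]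
      _ = O'.1 := KVJ.psi_phi O'.1 h2
end

section
/- Let Y be a finite connected simple graph. Define δ(Y) as the number of equivalence classes of acyclic orientations under the equivalence generated by source-to-sink operations together with full reversal of all edges. If Y is bipartite then δ(Y) = (κ(Y)+1)/2, and if Y is not bipartite then δ(Y) = κ(Y)/2. -/
/-- `Rev O O'` holds when `O'` is the full reversal of `O`. -/
def Rev {V : Type*} {G : SimpleGraph V} (O O' : GraphOrientation G) : Prop :=
  ∀ u v, O'.dir u v ↔ O.dir v u

/-- δ(G): the number of equivalence classes of acyclic orientations of `G` under the
equivalence generated by source-to-sink operations together with full reversal. -/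
noncomputable def delta {V : Type*} (G : SimpleGraph V) : ℕ :=
  Nat.card (Quot (fun A B : AcycGraphOrientation G => Click A.1 B.1 ∨ Rev A.1 B.1))

namespace MyAux
open scoped Classical
variable {V : Type*} {G : SimpleGraph V}

theorem GO.ext {O O' : GraphOrientation G} (h : O.dir = O'.dir) : O = O' := by
  cases O; cases O'; cases h; rfl

theorem GO.ext_iff {O O' : GraphOrientation G} (h : ∀ u v, O.dir u v ↔ O'.dir u v) : O = O' :=
  GO.ext (by funext u v; exact propext (h u v))

def rev (O : GraphOrientation G) : GraphOrientation G where
  dir u v := O.dir v u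
  consistent u v := by rw [O.consistent u v]; tauto
  asymm u v h hh := O.asymm v u h hh

theorem rev_rev (O : GraphOrientation G) : rev (rev O) = O := rfl

theorem dir_or (O : GraphOrientation G) {a b : V} (h : G.Adj a b) : O.dir a b ∨ O.dir b a :=
  (O.consistent a b).1 h

theorem dir_iff_not (O : GraphOrientation G) {a b : V} (h : G.Adj a b) :
    O.dir b a ↔ ¬ O.dir a b := by
  constructor
  · exact fun hb ha => O.asymm a b ha hb
  · intro ha; rcases dir_or O h with h' | h'
    · exact absurd h' ha
    · exact h'

open Classical in
noncomputable def nu (O : GraphOrientation G) : ∀ {x y : V}, G.Walk x y → ℤ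
  | _, _, SimpleGraph.Walk.nil => 0
  | x, _, @SimpleGraph.Walk.cons _ _ _ b _ h p => (if O.dir x b then 1 else -1) + nu O p

@[simp] theorem nu_nil (O : GraphOrientation G) {x : V} : nu O (SimpleGraph.Walk.nil : G.Walk x x) = 0 := rfl

open Classical in
@[simp] theorem nu_cons (O : GraphOrientation G) {a b y : V} (h : G.Adj a b) (p : G.Walk b y) :
    nu O (SimpleGraph.Walk.cons h p) = (if O.dir a b then 1 else -1) + nu O p := by
  simp [nu]

theorem nu_append (O : GraphOrientation G) {x y z : V} (p : G.Walk x y) (q : G.Walk y z) :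
    nu O (p.append q) = nu O p + nu O q := by
  induction p with
  | nil => simp
  | cons h p ih => simp [ih]; ring

theorem nu_reverse (O : GraphOrientation G) {x y : V} (p : G.Walk x y) :
    nu O p.reverse = - nu O p := by
  classical
  induction p with
  | nil => simp
  | @cons a b c h p ih =>
    rw [SimpleGraph.Walk.reverse_cons, nu_append, ih, nu_cons, nu_cons, nu_nil]
    rcases dir_or O h with hd | hd
    · have h2 : ¬ O.dir b a := fun hh => O.asymm _ _ hd hh
      simp [hd, h2]
    · have h2 : ¬ O.dir a b := fun hh => O.asymm _ _ hh hd
      simp [hd, h2]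


theorem nu_rev (O : GraphOrientation G) {x y : V} (p : G.Walk x y) :
    nu (rev O) p = - nu O p := by
  classical
  induction p with
  | nil => simp
  | @cons a b c h p ih =>
    rw [nu_cons, nu_cons, ih]
    rcases dir_or O h with hd | hd
    · have h2 : ¬ O.dir b a := fun hh => O.asymm _ _ hd hh
      simp [rev, hd, h2, add_comm]
    · have h2 : ¬ O.dir a b := fun hh => O.asymm _ _ hh hd
      simp [rev, hd, h2, add_comm]

theorem nu_parity (O : GraphOrientation G) {x y : V} (p : G.Walk x y) :
    ∃ k : ℤ, nu O p + p.length = 2 * k := by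
  classical
  induction p with
  | nil => exact ⟨0, by simp⟩
  | @cons a b c h p ih =>
    obtain ⟨k, hk⟩ := ih
    rw [nu_cons]
    by_cases hd : O.dir a b
    · exact ⟨k + 1, by simp [hd, SimpleGraph.Walk.length_cons]; push_cast; omega⟩
    · exact ⟨k, by simp [hd, SimpleGraph.Walk.length_cons]; push_cast; omega⟩

/-- Click at a specific vertex. -/
def ClickAt (O O' : GraphOrientation G) (v : V) : Prop :=
  (∀ u, ¬ O.dir u v) ∧
    ∀ u w, O'.dir u w ↔ (((u = v ∨ w = v) ∧ O.dir w u) ∨ (u ≠ v ∧ w ≠ v ∧ O.dir u w))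

theorem click_iff {O O' : GraphOrientation G} : Click O O' ↔ ∃ v, ClickAt O O' v := Iff.rfl

theorem clickAt_edge {O O' : GraphOrientation G} {v : V} (hc : ClickAt O O' v)
    {a b : V} (h : G.Adj a b) :
    (if O'.dir a b then (1:ℤ) else -1) =
      (if O.dir a b then (1:ℤ) else -1) + (if b = v then 2 else 0) - (if a = v then 2 else 0) := by
  obtain ⟨hsrc, hfor⟩ := hc
  have hne : a ≠ b := h.ne
  by_cases ha : a = v
  · subst ha
    have h1 : ¬ O'.dir a b := by
      rw [hfor]
      push_neg
      refine ⟨fun _ => hsrc b, fun h' => absurd rfl h'⟩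
    have h2 : O.dir a b := by
      rcases dir_or O h with hd | hd
      · exact hd
      · exact absurd hd (hsrc b)
    rw [if_neg h1, if_pos h2, if_neg (Ne.symm hne), if_pos rfl]
    norm_num
  · by_cases hb : b = v
    · subst hb
      have h2 : ¬ O.dir a b := hsrc a
      have h2' : O.dir b a := by
        rcases dir_or O h with hd | hd
        · exact absurd hd h2
        · exact hd
      have h1 : O'.dir a b := by rw [hfor]; exact Or.inl ⟨Or.inr rfl, h2'⟩
      rw [if_pos h1, if_neg h2, if_pos rfl, if_neg ha]
      norm_num
    · have h1 : O'.dir a b ↔ O.dir a b := by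
        rw [hfor]
        constructor
        · rintro (⟨hav | hbv, _⟩ | ⟨_, _, hd⟩)
          · exact absurd hav ha
          · exact absurd hbv hb
          · exact hd
        · intro hd; exact Or.inr ⟨ha, hb, hd⟩
      rw [if_neg hb, if_neg ha]
      by_cases hd : O.dir a b
      · rw [if_pos (h1.2 hd), if_pos hd]; norm_num
      · rw [if_neg (fun hh => hd (h1.1 hh)), if_neg hd]; norm_num

theorem clickAt_nu {O O' : GraphOrientation G} {v : V} (hc : ClickAt O O' v)
    {x y : V} (p : G.Walk x y) :
    nu O' p = nu O p + (if y = v then 2 else 0) - (if x = v then 2 else 0) := by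
  classical
  induction p with
  | nil => simp
  | @cons a b c h p ih =>
    rw [nu_cons, nu_cons, ih, clickAt_edge hc h]
    ring

theorem click_nu_closed {O O' : GraphOrientation G} (hc : Click O O')
    {x : V} (p : G.Walk x x) : nu O' p = nu O p := by
  obtain ⟨v, hv⟩ := hc
  rw [clickAt_nu hv p]
  ring

theorem clickAt_preserves_acyclic {O O' : GraphOrientation G} {v : V}
    (hc : ClickAt O O' v) (hO : O.IsAcyclic) : O'.IsAcyclic := by
  obtain ⟨hsrc, hfor⟩ := hc
  have hvsink : ∀ u, ¬ O'.dir v u := by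
    intro u hu
    rw [hfor] at hu
    rcases hu with ⟨_, hd⟩ | ⟨hne, _, _⟩
    · exact hsrc u hd
    · exact hne rfl
  have key : ∀ x y, Relation.TransGen O'.dir x y → y ≠ v → Relation.TransGen O.dir x y ∧ x ≠ v := by
    intro x y hxy
    induction hxy with
    | single hs =>
      intro hy
      have hx : x ≠ v := by
        rintro rfl
        exact hvsink _ hs
      rw [hfor] at hs
      rcases hs with ⟨hor, _⟩ | ⟨_, _, hd⟩
      · rcases hor with h1 | h1
        · exact absurd h1 hx
        · exact absurd h1 hy
      · exact ⟨Relation.TransGen.single hd, hx⟩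
    | tail hxb hs ih =>
      intro hy
      rename_i b _
      have hb : b ≠ v := by
        rintro rfl
        exact hvsink _ hs
      obtain ⟨ht, hx⟩ := ih hb
      rw [hfor] at hs
      rcases hs with ⟨hor, _⟩ | ⟨_, _, hd⟩
      · rcases hor with h1 | h1
        · exact absurd h1 hb
        · exact absurd h1 hy
      · exact ⟨ht.tail hd, hx⟩
  intro x hx
  by_cases hxv : x = v
  · subst hxv
    rcases (Relation.TransGen.head'_iff.1 hx) with ⟨b, hs, _⟩
    exact hvsink b hs
  · exact hO x (key x x hx hxv).1

theorem rev_preserves_acyclic {O : GraphOrientation G} (hO : O.IsAcyclic) :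
    (rev O).IsAcyclic := by
  intro v hv
  refine hO v ?_
  have : Relation.TransGen (Function.swap O.dir) v v := hv
  rwa [Relation.transGen_swap] at this

/-- In a finite nonempty set, an irreflexive relation whose transitive closure is
irreflexive has a minimal element. -/
theorem exists_min_rel [Fintype V] {O : GraphOrientation G} (hO : O.IsAcyclic)
    (U : Finset V) (hU : U.Nonempty) :
    ∃ s ∈ U, ∀ u ∈ U, ¬ Relation.TransGen O.dir u s := by
  classical
  obtain ⟨s, hs, hmin⟩ := U.exists_min_image
    (fun z => (U.filter (fun w => Relation.TransGen O.dir w z)).card) hU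
  refine ⟨s, hs, fun u hu ht => ?_⟩
  have hsubset : U.filter (fun w => Relation.TransGen O.dir w u) ⊆
      U.filter (fun w => Relation.TransGen O.dir w s) := by
    intro w hw
    rw [Finset.mem_filter] at *
    exact ⟨hw.1, hw.2.trans ht⟩
  have hnotmem : u ∉ U.filter (fun w => Relation.TransGen O.dir w u) := by
    rw [Finset.mem_filter]
    rintro ⟨_, hh⟩
    exact hO u hh
  have hmem : u ∈ U.filter (fun w => Relation.TransGen O.dir w s) := by
    rw [Finset.mem_filter]; exact ⟨hu, ht⟩
  have hlt : (U.filter (fun w => Relation.TransGen O.dir w u)).card <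
      (U.filter (fun w => Relation.TransGen O.dir w s)).card :=
    Finset.card_lt_card (Finset.ssubset_iff_of_subset hsubset |>.2 ⟨u, hmem, hnotmem⟩)
  exact absurd (hmin u hu) (by omega)

instance [Finite V] : Finite (GraphOrientation G) := by
  have : Function.Injective (fun O : GraphOrientation G => O.dir) := fun O O' h => GO.ext h
  exact Finite.of_injective _ this

instance [Finite V] : Finite (AcycGraphOrientation G) := by
  unfold AcycGraphOrientation
  infer_instance

/-! ### Quotient infrastructure -/

theorem clickAt_symm {O O' : GraphOrientation G} {v : V} (hc : ClickAt O O' v) :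
    ClickAt (rev O') (rev O) v := by
  obtain ⟨hsrc, hfor⟩ := hc
  have hvsink : ∀ u, ¬ O'.dir v u := by
    intro u hu
    rw [hfor] at hu
    rcases hu with ⟨_, hd⟩ | ⟨hne, _, _⟩
    · exact hsrc u hd
    · exact hne rfl
  constructor
  · intro u hu
    exact hvsink u hu
  · intro u w
    show O.dir w u ↔ ((u = v ∨ w = v) ∧ O'.dir u w) ∨ (u ≠ v ∧ w ≠ v ∧ O'.dir w u)
    rw [hfor u w, hfor w u]
    by_cases hu : u = v <;> by_cases hw : w = v <;>
      simp [hu, hw] <;> try tauto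

/-! ### Counting orbits of an involution -/

theorem eqvgen_invol {α : Type*} (i : α → α) (hi : ∀ a, i (i a) = a) {x y : α}
    (h : Relation.EqvGen (fun a b => b = i a) x y) : y = x ∨ y = i x := by
  induction h with
  | rel a b hab => exact Or.inr hab
  | refl a => exact Or.inl rfl
  | symm a b _ ih =>
    rcases ih with rfl | rfl
    · exact Or.inl rfl
    · exact Or.inr (hi a).symm
  | trans a b c _ _ ih1 ih2 =>
    rcases ih1 with rfl | rfl
    · exact ih2
    · rcases ih2 with rfl | rfl
      · exact Or.inr rfl
      · exact Or.inl (hi a)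

theorem mk_invol_eq {α : Type*} (i : α → α) (hi : ∀ a, i (i a) = a) {z x : α} :
    Quot.mk (fun a b => b = i a) z = Quot.mk (fun a b => b = i a) x ↔ (z = x ∨ z = i x) := by
  constructor
  · intro h
    rcases eqvgen_invol i hi (Quot.eq.1 h) with rfl | h2
    · exact Or.inl rfl
    · exact Or.inr (by rw [h2, hi])
  · rintro (rfl | rfl)
    · rfl
    · exact (@Quot.sound α (fun a b => b = i a) x (i x) rfl).symm

theorem two_mul_card_quot_invol {α : Type*} [Finite α] (i : α → α) (hi : ∀ a, i (i a) = a) :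
    2 * Nat.card (Quot (fun a b => b = i a)) = Nat.card α + Nat.card {x : α // i x = x} := by
  classical
  have : Fintype α := Fintype.ofFinite α
  have hfin : Finite (Quot (fun a b : α => b = i a)) :=
    Finite.of_surjective (Quot.mk _) Quot.exists_rep
  have : Fintype (Quot (fun a b : α => b = i a)) := Fintype.ofFinite _
  set π : α → Quot (fun a b : α => b = i a) := Quot.mk _ with hπ
  rw [Nat.card_eq_fintype_card, Nat.card_eq_fintype_card, Nat.card_eq_fintype_card]
  rw [show (Fintype.card α) = ∑ c : Quot (fun a b : α => b = i a),
    (Finset.univ.filter (fun x => π x = c)).card from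
    (Finset.card_eq_sum_card_fiberwise (fun x _ => Finset.mem_univ _))]
  rw [Fintype.card_subtype]
  rw [show (Finset.univ.filter (fun x : α => i x = x)).card = ∑ c : Quot (fun a b : α => b = i a),
    ((Finset.univ.filter (fun x : α => i x = x)).filter (fun x => π x = c)).card from
    (Finset.card_eq_sum_card_fiberwise (fun x _ => Finset.mem_univ _))]
  rw [Fintype.card, Finset.card_eq_sum_ones Finset.univ, Finset.mul_sum, ← Finset.sum_add_distrib]
  refine Finset.sum_congr rfl (fun c _ => ?_)
  obtain ⟨x, rfl⟩ := Quot.exists_rep c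
  by_cases hx : i x = x
  · have h1 : (Finset.univ.filter (fun z => π z = π x)) = {x} := by
      ext z
      simp only [Finset.mem_filter, Finset.mem_univ, true_and, Finset.mem_singleton, hπ]
      rw [mk_invol_eq i hi, hx, or_self]
    have h2 : ((Finset.univ.filter (fun z : α => i z = z)).filter (fun z => π z = π x)) = {x} := by
      ext z
      simp only [Finset.mem_filter, Finset.mem_univ, true_and, Finset.mem_singleton, hπ]
      rw [mk_invol_eq i hi, hx, or_self]
      constructor
      · rintro ⟨_, h⟩; exact h
      · rintro rfl; exact ⟨hx, rfl⟩
    rw [h1, h2]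
    simp
  · have h1 : (Finset.univ.filter (fun z => π z = π x)) = {x, i x} := by
      ext z
      simp only [Finset.mem_filter, Finset.mem_univ, true_and, Finset.mem_insert,
        Finset.mem_singleton, hπ]
      rw [mk_invol_eq i hi]
    have h2 : ((Finset.univ.filter (fun z : α => i z = z)).filter (fun z => π z = π x)) = ∅ := by
      ext z
      simp only [Finset.mem_filter, Finset.mem_univ, true_and, Finset.notMem_empty, iff_false,
        not_and, hπ]
      intro hz
      rw [mk_invol_eq i hi]
      rintro (rfl | rfl)
      · exact hx hz
      · rw [hi] at hz
        exact hx hz.symm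
    rw [h1, h2]
    rw [Finset.card_insert_of_notMem
      (by simp only [Finset.mem_singleton]; exact fun h => hx (by rw [← h])),
      Finset.card_singleton]
    simp

/-! ### Quotients of acyclic orientations -/

variable (G) in
def rKappa (A B : AcycGraphOrientation G) : Prop := Click A.1 B.1

variable (G) in
def rDelta (A B : AcycGraphOrientation G) : Prop := Click A.1 B.1 ∨ Rev A.1 B.1

def iRev (A : AcycGraphOrientation G) : AcycGraphOrientation G :=
  ⟨rev A.1, rev_preserves_acyclic A.2⟩

theorem iRev_invol (A : AcycGraphOrientation G) : iRev (iRev A) = A := rfl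

theorem click_rev {O O' : GraphOrientation G} (h : Click O O') : Click (rev O') (rev O) := by
  obtain ⟨v, hv⟩ := h
  exact ⟨v, clickAt_symm hv⟩

variable (G) in
def iQ : Quot (rKappa G) → Quot (rKappa G) :=
  Quot.lift (fun A => Quot.mk _ (iRev A))
    (fun A B h => (Quot.sound (show rKappa G (iRev B) (iRev A) from click_rev h)).symm)

theorem iQ_invol (q : Quot (rKappa G)) : iQ G (iQ G q) = q := by
  induction q using Quot.ind with
  | _ A => rfl

theorem rev_iff {O O' : GraphOrientation G} : Rev O O' ↔ O' = rev O := by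
  constructor
  · intro h
    exact GO.ext_iff (fun u v => (h u v).trans Iff.rfl)
  · rintro rfl
    exact fun u v => Iff.rfl

def deltaEquiv : Quot (rDelta G) ≃ Quot (fun x y : Quot (rKappa G) => y = iQ G x) where
  toFun := Quot.lift (fun A => Quot.mk _ (Quot.mk (rKappa G) A)) (by
    intro A B h
    rcases h with h | h
    · exact congrArg _ (Quot.sound h)
    · have hB : B = iRev A := Subtype.ext (rev_iff.1 h)
      subst hB
      exact @Quot.sound _ (fun x y : Quot (rKappa G) => y = iQ G x) _ _ rfl)
  invFun := Quot.lift (Quot.lift (fun A => Quot.mk (rDelta G) A)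
      (fun A B h => Quot.sound (Or.inl h))) (by
    intro x y h
    subst h
    induction x using Quot.ind with
    | _ A =>
      show Quot.mk (rDelta G) A = Quot.mk (rDelta G) (iRev A)
      exact Quot.sound (Or.inr (rev_iff.2 rfl)))
  left_inv := by
    intro q
    induction q using Quot.ind with
    | _ A => rfl
  right_inv := by
    intro q
    induction q using Quot.ind with
    | _ x =>
      induction x using Quot.ind with
      | _ A => rfl

theorem eqvgen_nu {A B : AcycGraphOrientation G} (h : Relation.EqvGen (rKappa G) A B)
    {x : V} (c : G.Walk x x) : nu A.1 c = nu B.1 c := by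
  induction h with
  | rel a b hab => exact (click_nu_closed hab c).symm
  | refl a => rfl
  | symm a b _ ih => exact ih.symm
  | trans a b c _ _ ih1 ih2 => exact ih1.trans ih2

/-! ### Acyclicity from a rank function -/

theorem acyclic_of_rank {O : GraphOrientation G} (f : V → ℕ)
    (h : ∀ a b, O.dir a b → f a < f b) : O.IsAcyclic := by
  intro v hv
  have key : ∀ x y, Relation.TransGen O.dir x y → f x < f y := by
    intro x y hxy
    induction hxy with
    | single hs => exact h _ _ hs
    | tail _ hs ih => exact ih.trans (h _ _ hs)
  exact absurd (key v v hv) (lt_irrefl _)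

/-! ### The bipartite canonical orientations -/

theorem fin2 (x : Fin 2) : x = 0 ∨ x = 1 := by omega

def OS (C : G.Coloring (Fin 2)) (S : Finset V) : GraphOrientation G where
  dir a b := G.Adj a b ∧ ((C a = 0 ∧ a ∉ S) ∨ (C b = 0 ∧ b ∈ S))
  consistent a b := by
    constructor
    · intro h
      have hne := C.valid h
      have h0 : C a = 0 ∨ C b = 0 := by
        rcases fin2 (C a) with h1 | h1 <;> rcases fin2 (C b) with h2 | h2 <;> simp_all
      have hadj' : G.Adj b a := h.symm
      by_cases hs : a ∈ S <;> by_cases ht : b ∈ S <;> tauto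
    · rintro (⟨h, _⟩ | ⟨h, _⟩)
      · exact h
      · exact h.symm
  asymm a b := by
    rintro ⟨hadj, h1⟩ ⟨_, h2⟩
    have hne := C.valid hadj
    have hnb : ¬ (C a = 0 ∧ C b = 0) := by
      rintro ⟨ha, hb⟩; rw [ha, hb] at hne; exact hne rfl
    tauto

theorem OS_acyclic (C : G.Coloring (Fin 2)) (S : Finset V) (hS : ∀ x ∈ S, C x = 0) :
    (OS C S).IsAcyclic := by
  classical
  apply acyclic_of_rank (fun a => if a ∈ S then 2 else if C a = 0 then 0 else 1)
  rintro a b ⟨hadj, ⟨h0, hns⟩ | ⟨h0, hmem⟩⟩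
  · have hb0 : ¬ C b = 0 := by
      intro hb; exact C.valid hadj (by rw [h0, hb])
    have hbs : b ∉ S := fun hh => hb0 (hS b hh)
    simp [hns, h0, hbs, hb0]
  · have ha0 : ¬ C a = 0 := by
      intro ha; exact C.valid hadj (by rw [h0, ha])
    have has : a ∉ S := fun hh => ha0 (hS a hh)
    simp [hmem, has, ha0]

theorem OS_clickAt (C : G.Coloring (Fin 2)) (S : Finset V) (hS : ∀ x ∈ S, C x = 0)
    {v : V} (hv0 : C v = 0) (hvS : v ∉ S) :
    ClickAt (OS C S) (OS C (insert v S)) v := by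
  classical
  constructor
  · rintro u ⟨hadj, ⟨hu0, _⟩ | ⟨hv0', hvS'⟩⟩
    · exact C.valid hadj (by rw [hu0, hv0])
    · exact hvS hvS'
  · intro u w
    by_cases hu : u = v
    · subst hu
      simp only [ne_eq, not_true_eq_false, false_and, or_false]
      constructor
      · rintro ⟨hadj, ⟨_, hmem⟩ | ⟨hw0, hmem⟩⟩
        · exact absurd (Finset.mem_insert_self _ _) hmem
        · rcases Finset.mem_insert.1 hmem with rfl | hmem'
          · exact absurd hadj (G.irrefl)
          · exact absurd hv0 (fun hh => C.valid hadj (by rw [hw0, hh]))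
      · rintro ⟨_, hadj, ⟨hw0, _⟩ | ⟨_, hmem⟩⟩
        · exact absurd hv0 (fun hh => C.valid hadj.symm (by rw [hw0, hh]))
        · exact absurd hmem hvS
    · by_cases hw : w = v
      · subst hw
        constructor
        · rintro ⟨hadj, _⟩
          exact Or.inl ⟨Or.inr rfl, hadj.symm, Or.inl ⟨hv0, hvS⟩⟩
        · rintro (⟨_, hadj, _⟩ | ⟨_, hne, _⟩)
          · exact ⟨hadj.symm, Or.inr ⟨hv0, Finset.mem_insert_self _ _⟩⟩
          · exact absurd rfl hne
      · have hmu : u ∈ insert v S ↔ u ∈ S := by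
          rw [Finset.mem_insert]; exact or_iff_right hu
        have hmw : w ∈ insert v S ↔ w ∈ S := by
          rw [Finset.mem_insert]; exact or_iff_right hw
        constructor
        · rintro ⟨hadj, h⟩
          rw [hmu, hmw] at h
          exact Or.inr ⟨hu, hw, hadj, h⟩
        · rintro (⟨hor, _⟩ | ⟨_, _, hadj, h⟩)
          · rcases hor with rfl | rfl
            · exact absurd rfl hu
            · exact absurd rfl hw
          · exact ⟨hadj, by rw [hmu, hmw]; exact h⟩

theorem OS_chain (C : G.Coloring (Fin 2)) (S : Finset V) :
    ∀ (hS : ∀ x ∈ S, C x = 0),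
    Relation.EqvGen (rKappa G)
      ⟨OS C ∅, OS_acyclic C ∅ (by simp)⟩ ⟨OS C S, OS_acyclic C S hS⟩ := by
  classical
  induction S using Finset.induction_on with
  | empty => intro _; exact Relation.EqvGen.refl _
  | @insert v S hvS ih =>
    intro hS
    have hS' : ∀ x ∈ S, C x = 0 := fun x hx => hS x (Finset.mem_insert_of_mem hx)
    have hv0 : C v = 0 := hS v (Finset.mem_insert_self _ _)
    refine Relation.EqvGen.trans _ _ _ (ih hS') ?_
    exact Relation.EqvGen.rel _ _ ⟨v, OS_clickAt C S hS' hv0 hvS⟩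

/-! ### Completeness of the circulation invariant -/

noncomputable def walkTo (hconn : G.Connected) (x : V) : G.Walk hconn.nonempty.some x :=
  (hconn.preconnected hconn.nonempty.some x).some

noncomputable def Hf (hconn : G.Connected) (O O' : GraphOrientation G) (x : V) : ℤ :=
  nu O (walkTo hconn x) - nu O' (walkTo hconn x)

theorem nu_sub_even (O O' : GraphOrientation G) {a b : V} (q : G.Walk a b) :
    ∃ k : ℤ, nu O q - nu O' q = 2 * k := by
  classical
  induction q with
  | nil => exact ⟨0, by simp⟩
  | @cons a b c h p ih =>
    obtain ⟨k, hk⟩ := ih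
    rw [nu_cons, nu_cons]
    by_cases h1 : O.dir a b <;> by_cases h2 : O'.dir a b
    · exact ⟨k, by rw [if_pos h1, if_pos h2]; linarith⟩
    · exact ⟨k + 1, by rw [if_pos h1, if_neg h2]; linarith⟩
    · exact ⟨k - 1, by rw [if_neg h1, if_pos h2]; linarith⟩
    · exact ⟨k, by rw [if_neg h1, if_neg h2]; linarith⟩

theorem Hf_even (hconn : G.Connected) (O O' : GraphOrientation G) (x : V) :
    ∃ k : ℤ, Hf hconn O O' x = 2 * k :=
  nu_sub_even O O' (walkTo hconn x)

theorem Hf_walk (hconn : G.Connected) {O O' : GraphOrientation G}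
    (hyp : ∀ y, ∀ c : G.Walk y y, nu O c = nu O' c) {a b : V} (q : G.Walk a b) :
    nu O q - nu O' q = Hf hconn O O' b - Hf hconn O O' a := by
  have hc := hyp _ ((walkTo hconn a).append (q.append (walkTo hconn b).reverse))
  rw [nu_append, nu_append, nu_reverse, nu_append, nu_append, nu_reverse] at hc
  unfold Hf
  linarith

def clickOrient (O : GraphOrientation G) (s : V) : GraphOrientation G where
  dir u w := ((u = s ∨ w = s) ∧ O.dir w u) ∨ (u ≠ s ∧ w ≠ s ∧ O.dir u w)
  consistent u w := by
    rw [O.consistent u w]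
    have hss : ¬ O.dir s s := fun hh => O.asymm s s hh hh
    by_cases hu : u = s <;> by_cases hw : w = s
    · rw [hu, hw]; tauto
    · rw [hu]; tauto
    · rw [hw]; tauto
    · tauto
  asymm u w h1 h2 := by
    rcases h1 with ⟨ho1, hd1⟩ | ⟨hu1, hw1, hd1⟩ <;> rcases h2 with ⟨ho2, hd2⟩ | ⟨hu2, hw2, hd2⟩
    · exact O.asymm _ _ hd1 hd2
    · tauto
    · tauto
    · exact O.asymm _ _ hd1 hd2

theorem clickOrient_clickAt {O : GraphOrientation G} {s : V} (hsrc : ∀ u, ¬ O.dir u s) :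
    ClickAt O (clickOrient O s) s :=
  ⟨hsrc, fun _ _ => Iff.rfl⟩

theorem complete [Fintype V] (hconn : G.Connected) (B A : AcycGraphOrientation G)
    (hyp : ∀ x, ∀ c : G.Walk x x, nu A.1 c = nu B.1 c) :
    Relation.EqvGen (rKappa G) A B := by
  classical
  haveI : Nonempty V := hconn.nonempty
  have himg : ∀ O : GraphOrientation G, (Finset.univ.image (Hf hconn O B.1)).Nonempty :=
    fun O => Finset.univ_nonempty.image _
  suffices h : ∀ (n : ℕ) (A : AcycGraphOrientation G),
      (∀ x, ∀ c : G.Walk x x, nu A.1 c = nu B.1 c) →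
      (∑ x : V, ((Finset.univ.image (Hf hconn A.1 B.1)).max' (himg A.1) - Hf hconn A.1 B.1 x)).toNat = n →
      Relation.EqvGen (rKappa G) A B by
    exact h _ A hyp rfl
  intro n
  induction n using Nat.strong_induction_on with
  | _ n ih =>
    intro A hyp hn
    set H : V → ℤ := Hf hconn A.1 B.1 with hH
    set M : ℤ := (Finset.univ.image H).max' (himg A.1) with hM
    have hHle : ∀ x, H x ≤ M := fun x =>
      Finset.le_max' _ _ (Finset.mem_image_of_mem H (Finset.mem_univ x))
    by_cases hcst : ∀ x y : V, H x = H y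
    · -- constant: A = B
      have hdir : ∀ u v, A.1.dir u v ↔ B.1.dir u v := by
        intro u v
        by_cases hadj : G.Adj u v
        · have hw := Hf_walk hconn hyp (SimpleGraph.Walk.cons hadj SimpleGraph.Walk.nil)
          rw [nu_cons, nu_cons, nu_nil, nu_nil] at hw
          rw [← hH, hcst v u, sub_self] at hw
          by_cases h1 : A.1.dir u v <;> by_cases h2 : B.1.dir u v
          · exact iff_of_true h1 h2
          · rw [if_pos h1, if_neg h2] at hw; norm_num at hw
          · rw [if_neg h1, if_pos h2] at hw; norm_num at hw
          · exact iff_of_false h1 h2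
        · constructor
          · intro hd; exact absurd ((A.1.consistent u v).2 (Or.inl hd)) hadj
          · intro hd; exact absurd ((B.1.consistent u v).2 (Or.inl hd)) hadj
      have : A = B := Subtype.ext (GO.ext_iff hdir)
      rw [this]
      exact Relation.EqvGen.refl _
    · push_neg at hcst
      obtain ⟨x₀, y₀, hxy⟩ := hcst
      set m : ℤ := (Finset.univ.image H).min' (himg A.1) with hm
      have hmle : ∀ x, m ≤ H x := fun x =>
        Finset.min'_le _ _ (Finset.mem_image_of_mem H (Finset.mem_univ x))
      have hmM : m < M := by
        rcases lt_or_eq_of_le ((hmle x₀).trans (hHle x₀)) with h | h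
        · exact h
        · exfalso
          exact hxy (le_antisymm (h ▸ hHle x₀) (h ▸ hmle x₀) |>.trans
            (le_antisymm (h ▸ hHle y₀) (h ▸ hmle y₀)).symm)
      have hm2M : m + 2 ≤ M := by
        obtain ⟨xm, _, hxm⟩ := Finset.mem_image.1 ((Finset.univ.image H).min'_mem (himg A.1))
        obtain ⟨xM, _, hxM⟩ := Finset.mem_image.1 ((Finset.univ.image H).max'_mem (himg A.1))
        obtain ⟨k1, hk1⟩ := Hf_even hconn A.1 B.1 xm
        obtain ⟨k2, hk2⟩ := Hf_even hconn A.1 B.1 xM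
        rw [← hH] at hk1 hk2
        rw [← hm] at hxm
        rw [← hM] at hxM
        omega
      -- the set of minimisers
      set U : Finset V := Finset.univ.filter (fun x => H x = m) with hU
      have hUne : U.Nonempty := by
        obtain ⟨xm, _, hxm⟩ := Finset.mem_image.1 ((Finset.univ.image H).min'_mem (himg A.1))
        exact ⟨xm, Finset.mem_filter.2 ⟨Finset.mem_univ _, by rw [← hm] at hxm; exact hxm⟩⟩
      obtain ⟨s, hsU, hsmin⟩ := exists_min_rel A.2 U hUne
      have hHs : H s = m := (Finset.mem_filter.1 hsU).2
      -- s is a global source of A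
      have hsrc : ∀ u, ¬ A.1.dir u s := by
        intro u hu
        have hadj : G.Adj u s := (A.1.consistent u s).2 (Or.inl hu)
        by_cases hu' : u ∈ U
        · exact hsmin u hu' (Relation.TransGen.single hu)
        · have hune : H u ≠ m := fun hh =>
            hu' (Finset.mem_filter.2 ⟨Finset.mem_univ _, hh⟩)
          have humlt : m < H u := lt_of_le_of_ne (hmle u) (Ne.symm hune)
          have hw := Hf_walk hconn hyp (SimpleGraph.Walk.cons hadj SimpleGraph.Walk.nil)
          rw [nu_cons, nu_cons, nu_nil, nu_nil, if_pos hu] at hw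
          rw [← hH, hHs] at hw
          by_cases h2 : B.1.dir u s
          · rw [if_pos h2] at hw; omega
          · rw [if_neg h2] at hw; omega
      -- click at s
      have hcA : ClickAt A.1 (clickOrient A.1 s) s := clickOrient_clickAt hsrc
      set A' : AcycGraphOrientation G :=
        ⟨clickOrient A.1 s, clickAt_preserves_acyclic hcA A.2⟩ with hA'
      have hyp' : ∀ x, ∀ c : G.Walk x x, nu A'.1 c = nu B.1 c := by
        intro x c
        rw [show nu A'.1 c = nu A.1 c from click_nu_closed ⟨s, hcA⟩ c]
        exact hyp x c
      -- relation between H' and H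
      set H' : V → ℤ := Hf hconn A'.1 B.1 with hH'
      set c0 : ℤ := if hconn.nonempty.some = s then 2 else 0 with hc0
      have hH'x : ∀ x, H' x = H x + (if x = s then 2 else 0) - c0 := by
        intro x
        have := clickAt_nu hcA (walkTo hconn x)
        rw [hH', hH, Hf, Hf, this, hc0]
        ring
      -- new max
      have hM' : (Finset.univ.image H').max' (himg A'.1) = M - c0 := by
        apply le_antisymm
        · apply Finset.max'_le
          intro y hy
          obtain ⟨x, _, rfl⟩ := Finset.mem_image.1 hy
          rw [hH'x x]
          by_cases hxs : x = s
          · rw [if_pos hxs, hxs, hHs]; omega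
          · rw [if_neg hxs]; have := hHle x; omega
        · obtain ⟨xM, _, hxM⟩ := Finset.mem_image.1 ((Finset.univ.image H).max'_mem (himg A.1))
          rw [← hM] at hxM
          have hxMs : xM ≠ s := by
            intro hh; rw [hh, hHs] at hxM; omega
          have : H' xM = M - c0 := by rw [hH'x xM, if_neg hxMs, hxM]; ring
          exact this ▸ Finset.le_max' _ _ (Finset.mem_image_of_mem H' (Finset.mem_univ xM))
      -- sum decreases by 2
      have hsum : (∑ x : V, ((Finset.univ.image H').max' (himg A'.1) - H' x)) =
          (∑ x : V, (M - H x)) - 2 := by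
        rw [hM']
        have : ∀ x : V, (M - c0 - H' x) = (M - H x) - (if x = s then 2 else 0) := by
          intro x; rw [hH'x x]; ring
        rw [Finset.sum_congr rfl (fun x _ => this x), Finset.sum_sub_distrib]
        congr 1
        rw [Finset.sum_ite_eq' Finset.univ s (fun _ => (2:ℤ))]
        simp
      have hterm : ∀ x : V, 0 ≤ M - H x := fun x => by have := hHle x; omega
      have hsge : 2 ≤ (∑ x : V, (M - H x)) := by
        have h1 : M - H s ≤ ∑ x : V, (M - H x) :=
          Finset.single_le_sum (fun x _ => hterm x) (Finset.mem_univ s)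
        rw [hHs] at h1
        omega
      have hsum_nonneg : 0 ≤ (∑ x : V, (M - H x)) := by positivity
      have hnval : (∑ x : V, (M - H x)).toNat = n := hn
      have hlt : (∑ x : V, ((Finset.univ.image H').max' (himg A'.1) - H' x)).toNat < n := by
        rw [hsum]; omega
      have hrec := ih _ hlt A' hyp' rfl
      exact Relation.EqvGen.trans _ _ _ (Relation.EqvGen.rel A A' (show Click A.1 A'.1 from ⟨s, hcA⟩)) hrec

/-! ### Odd closed walks and bipartiteness -/

theorem exists_odd_closed_walk (hconn : G.Connected) (h2 : ¬ G.Colorable 2) :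
    ∃ (x : V) (c : G.Walk x x), Odd c.length := by
  by_contra h
  push_neg at h
  apply h2
  refine ⟨SimpleGraph.Coloring.mk
    (fun x => (⟨(walkTo hconn x).length % 2, by omega⟩ : Fin 2)) ?_⟩
  intro a b hadj hc
  have hcw := h _ ((walkTo hconn a).append (SimpleGraph.Walk.cons hadj (walkTo hconn b).reverse))
  rw [SimpleGraph.Walk.length_append, SimpleGraph.Walk.length_cons,
    SimpleGraph.Walk.length_reverse] at hcw
  rw [Nat.odd_iff] at hcw
  have hv := congrArg Fin.val hc
  simp only [] at hv
  omega

theorem nu_OS_empty (C : G.Coloring (Fin 2)) {x y : V} (p : G.Walk x y) :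
    nu (OS C ∅) p = (if C x = 0 then 1 else 0) - (if C y = 0 then 1 else 0) := by
  classical
  induction p with
  | nil => simp
  | @cons a b c h p ih =>
    rw [nu_cons, ih]
    by_cases hca : C a = 0
    · have hcb : ¬ C b = 0 := by
        intro hb; exact C.valid h (by rw [hca, hb])
      rw [if_pos ⟨h, Or.inl ⟨hca, Finset.notMem_empty a⟩⟩, if_pos hca, if_neg hcb]
      ring
    · have hcb : C b = 0 := by
        rcases fin2 (C b) with h1 | h1
        · exact h1
        · rcases fin2 (C a) with h2 | h2
          · exact absurd h2 hca
          · exact absurd (by rw [h1, h2]) (C.valid h)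
      have hnd : ¬ (OS C ∅).dir a b := by
        rintro ⟨_, ⟨h1, _⟩ | ⟨_, h1⟩⟩
        · exact hca h1
        · exact Finset.notMem_empty b h1
      rw [if_neg hnd, if_neg hca, if_pos hcb]
      ring

theorem rev_OS_empty [Fintype V] (C : G.Coloring (Fin 2)) :
    rev (OS C ∅) = OS C (Finset.univ.filter (fun x => C x = 0)) := by
  classical
  apply GO.ext_iff
  intro a b
  show (OS C ∅).dir b a ↔ _
  constructor
  · rintro ⟨hadj, ⟨hb0, _⟩ | ⟨_, hmem⟩⟩
    · exact ⟨hadj.symm, Or.inr ⟨hb0, Finset.mem_filter.2 ⟨Finset.mem_univ _, hb0⟩⟩⟩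
    · exact absurd hmem (Finset.notMem_empty a)
  · rintro ⟨hadj, ⟨ha0, hmem⟩ | ⟨hb0, _⟩⟩
    · exact absurd (show a ∈ Finset.univ.filter (fun x => C x = 0) from
        Finset.mem_filter.2 ⟨Finset.mem_univ a, ha0⟩) hmem
    · exact ⟨hadj.symm, Or.inl ⟨hb0, Finset.notMem_empty b⟩⟩

/-! ### Main theorem -/

theorem main [Fintype V] (hconn : G.Connected) :
    (G.Colorable 2 → 2 * delta G = kappa G + 1) ∧
    (¬ G.Colorable 2 → 2 * delta G = kappa G) := by
  classical
  haveI hfinA : Finite (AcycGraphOrientation G) := inferInstance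
  haveI hfinQ : Finite (Quot (rKappa G)) := Finite.of_surjective _ Quot.exists_rep
  have hdq : delta G = Nat.card (Quot (fun x y : Quot (rKappa G) => y = iQ G x)) :=
    Nat.card_congr deltaEquiv
  have hkq : kappa G = Nat.card (Quot (rKappa G)) := rfl
  have hcount := two_mul_card_quot_invol (iQ G) (iQ_invol (G := G))
  have hzero_of_fix : ∀ A : AcycGraphOrientation G,
      iQ G (Quot.mk _ A) = Quot.mk _ A → ∀ (x : V) (c : G.Walk x x), nu A.1 c = 0 := by
    intro A hA x c
    have heq : Relation.EqvGen (rKappa G) (iRev A) A := Quot.eq.1 hA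
    have h1 := eqvgen_nu heq c
    have h2 : nu (iRev A).1 c = - nu A.1 c := nu_rev A.1 c
    omega
  constructor
  · -- bipartite case
    intro hcol
    obtain ⟨C⟩ := hcol
    set A0 : AcycGraphOrientation G := ⟨OS C ∅, OS_acyclic C ∅ (by simp)⟩ with hA0
    have hfix0 : iQ G (Quot.mk _ A0) = Quot.mk _ A0 := by
      have hC0 : ∀ x ∈ Finset.univ.filter (fun x => C x = 0), C x = 0 :=
        fun x hx => (Finset.mem_filter.1 hx).2
      have hiRev : iRev A0 =
          ⟨OS C (Finset.univ.filter (fun x => C x = 0)), OS_acyclic C _ hC0⟩ :=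
        Subtype.ext (rev_OS_empty C)
      show Quot.mk _ (iRev A0) = Quot.mk _ A0
      rw [hiRev]
      exact (Quot.eq.2 (OS_chain C _ hC0)).symm
    have huniq : ∀ q : Quot (rKappa G), iQ G q = q → q = Quot.mk _ A0 := by
      intro q hq
      obtain ⟨A, rfl⟩ := Quot.exists_rep q
      have hz := hzero_of_fix A hq
      have hz0 : ∀ (x : V) (c : G.Walk x x), nu A0.1 c = 0 := by
        intro x c
        rw [hA0]
        rw [nu_OS_empty C c]
        ring
      have hyp : ∀ (x : V) (c : G.Walk x x), nu A.1 c = nu A0.1 c := by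
        intro x c; rw [hz x c, hz0 x c]
      exact Quot.eq.2 (complete hconn A0 A hyp)
    haveI : Nonempty {x : Quot (rKappa G) // iQ G x = x} := ⟨⟨Quot.mk _ A0, hfix0⟩⟩
    haveI : Subsingleton {x : Quot (rKappa G) // iQ G x = x} :=
      ⟨fun a b => Subtype.ext ((huniq a.1 a.2).trans (huniq b.1 b.2).symm)⟩
    have hone : Nat.card {x : Quot (rKappa G) // iQ G x = x} = 1 := Nat.card_unique
    rw [hdq, hkq]
    omega
  · -- non-bipartite case
    intro h2
    obtain ⟨x, c, hodd⟩ := exists_odd_closed_walk hconn h2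
    haveI : IsEmpty {q : Quot (rKappa G) // iQ G q = q} := by
      constructor
      rintro ⟨q, hq⟩
      obtain ⟨A, rfl⟩ := Quot.exists_rep q
      have hz := hzero_of_fix A hq x c
      obtain ⟨k, hk⟩ := nu_parity A.1 c
      rw [Nat.odd_iff] at hodd
      omega
    have hzero : Nat.card {q : Quot (rKappa G) // iQ G q = q} = 0 := Nat.card_of_isEmpty
    rw [hdq, hkq]
    omega

end MyAux

theorem delta_from_kappa {V : Type*} [Fintype V] (G : SimpleGraph V)
    (hconn : G.Connected) :
    (G.Colorable 2 → 2 * delta G = kappa G + 1) ∧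
    (¬ G.Colorable 2 → 2 * delta G = kappa G) := by
  exact MyAux.main hconn
end
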